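/- arXiv:1810.09651 — 9 statements merged into one kernel-verified Lean document; each statement's English description precedes it below -/
import Mathlib

section
/- Let N > 1 be an integer and let a be a unit of ℤ/Nℤ. Then N is prime if and only if the equality (x + a)^N = x^N + a holds in the polynomial ring (ℤ/Nℤ)[x]. -/
/-! For prime `N` the identity is the Frobenius endomorphism together with Fermat's
little theorem `a ^ N = a`. Conversely, since `a` is a unit, comparing the coefficients of `X ^ k`
gives `N ∣ C(N, k)` for `0 < k < N`, and this fails for `k` the least prime factor of `N`
whenever `N` is composite. -/

open Polynomial

/-- By Lucas' theorem: `n - 1` and `p - 1` both end in the digit `p - 1` in base `p`. -/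
lemma Nat.choose_pred_pred_modEq_one {n p : ℕ} (hp : p.Prime) (hpn : p ∣ n) (hn : 0 < n) :
    (n - 1).choose (p - 1) ≡ 1 [MOD p] := by
  have : Fact p.Prime := ⟨hp⟩
  have hp0 := hp.pos
  have hmod : (n - 1) % p = p - 1 := by
    obtain ⟨m, rfl⟩ := hpn
    obtain ⟨m, rfl⟩ : ∃ m', m = m' + 1 := Nat.exists_eq_add_one.mpr (Nat.pos_of_mul_pos_left hn)
    rw [show p * (m + 1) - 1 = p - 1 + p * m by rw [Nat.mul_succ]; omega,
      Nat.add_mul_mod_self_left, Nat.mod_eq_of_lt (by omega)]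
  have hdiv : (p - 1) / p = 0 := Nat.div_eq_of_lt (by omega)
  have hmod' : (p - 1) % p = p - 1 := Nat.mod_eq_of_lt (by omega)
  simpa [hmod, hmod', hdiv] using
    (Choose.choose_modEq_choose_mod_mul_choose_div_nat (n := n - 1) (k := p - 1) (p := p))

lemma Nat.not_dvd_choose_of_prime_dvd {n p : ℕ} (hp : p.Prime) (hpn : p ∣ n) (hn : 0 < n) :
    ¬ n ∣ n.choose p := by
  rintro ⟨t, ht⟩
  have hpascal : n * (n - 1).choose (p - 1) = n.choose p * p := by
    have := Nat.add_one_mul_choose_eq (n - 1) (p - 1)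
    rwa [Nat.sub_add_cancel hn, Nat.sub_add_cancel hp.one_lt.le] at this
  have hquot : (n - 1).choose (p - 1) = t * p := by
    rw [ht, mul_assoc] at hpascal
    exact Nat.eq_of_mul_eq_mul_left hn hpascal
  have hone := Nat.choose_pred_pred_modEq_one hp hpn hn
  rw [hquot, Nat.ModEq, Nat.mul_mod_left, Nat.mod_eq_of_lt hp.one_lt] at hone
  exact zero_ne_one hone

lemma Nat.prime_of_dvd_choose {n : ℕ} (hn : 1 < n)
    (h : ∀ k, 0 < k → k < n → n ∣ n.choose k) : n.Prime := by
  by_contra hnp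
  have hp : n.minFac.Prime := Nat.minFac_prime (by omega)
  have hlt : n.minFac < n :=
    lt_of_le_of_ne (Nat.minFac_le (by omega)) fun he => hnp (he ▸ hp)
  exact Nat.not_dvd_choose_of_prime_dvd hp (Nat.minFac_dvd n) (by omega)
    (h _ hp.pos hlt)

lemma Polynomial.natCast_choose_eq_zero_of_X_add_C_pow_eq {R : Type*} [CommRing R] {n : ℕ}
    {a : Rˣ} (h : (X + C (a : R)) ^ n = X ^ n + C (a : R)) {k : ℕ} (hk0 : 0 < k)
    (hkn : k < n) : (n.choose k : R) = 0 := by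
  have hcoeff := congrArg (coeff · k) h
  simp only [coeff_X_add_C_pow, coeff_add, coeff_X_pow, coeff_C, if_neg hkn.ne,
    if_neg hk0.ne', add_zero] at hcoeff
  rwa [← Units.val_pow_eq_pow_val, Units.mul_right_eq_zero] at hcoeff

/-- An integer `N > 1` is prime if and only if, for any unit `a` of `ℤ/Nℤ`,
`(x + a)^N = x^N + a` holds in `(ℤ/Nℤ)[x]`. -/
theorem stmt_0 (N : ℕ) (hN : 1 < N) (a : (ZMod N)ˣ) :
    N.Prime ↔ (X + C (a : ZMod N)) ^ N = X ^ N + C (a : ZMod N) := by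
  constructor
  · intro hp
    have : Fact N.Prime := ⟨hp⟩
    rw [add_pow_char, ← C_pow, ZMod.pow_card]
  · intro h
    refine Nat.prime_of_dvd_choose hN fun k hk0 hkN => ?_
    exact (ZMod.natCast_eq_zero_iff _ _).mp
      (natCast_choose_eq_zero_of_X_add_C_pow_eq h hk0 hkN)
end

section
/- Let N > 1 be a composite integer, let p be a prime dividing N such that N is not a power of p, and let f ∈ (ℤ/pℤ)[x] be irreducible. Then the number of polynomials h ∈ (ℤ/pℤ)[x] with deg h < deg f such that (h(x) + 1)^N ≡ h(x)^N + 1 (mod f(x)) in (ℤ/pℤ)[x] is less than N. -/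
/-!
Write `N = p ^ a * m` with `p ∤ m`. In characteristic `p` we have
`(X + 1) ^ N = (X ^ p ^ a + 1) ^ m`, so the coefficient of `X ^ p ^ a` in `G = (X + 1) ^ N - (X ^ N + 1)` is `m ≠ 0`, while `N ≠ p ^ a`;
hence `G` is a nonzero polynomial of degree `< N`. Reduction modulo `f` is injective on polynomials
of degree `< deg f` and sends every counted `h` to a root of `G` in the field `(ℤ/pℤ)[x]/(f)`.
-/

open Polynomial

theorem coeff_X_add_one_pow_pow_mul {R : Type*} [CommRing R] {p : ℕ} [ExpChar R p] (a m : ℕ) :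
    ((X + 1 : R[X]) ^ (p ^ a * m)).coeff (p ^ a) = (m : R) := by
  have hfrob : (X + 1 : R[X]) ^ p ^ a = expand R (p ^ a) (X + 1) := by
    simp [add_pow_expChar_pow]
  rw [pow_mul, hfrob, ← map_pow]
  nth_rw 2 [← one_mul (p ^ a)]
  rw [coeff_expand_mul (pow_pos (expChar_pos R p) a), coeff_X_add_one_pow, Nat.choose_one_right]

theorem X_add_one_pow_sub_ne_zero {R : Type*} [CommRing R] {p : ℕ} [Fact p.Prime] [CharP R p]
    {N : ℕ} (hN : N ≠ 0) (hpow : ∀ k, N ≠ p ^ k) : (X + 1 : R[X]) ^ N - (X ^ N + 1) ≠ 0 := by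
  obtain ⟨a, m, hpm, rfl⟩ : ∃ a m, ¬ p ∣ m ∧ N = p ^ a * m :=
    ⟨_, _, Nat.not_dvd_ordCompl Fact.out hN, (Nat.ordProj_mul_ordCompl_eq_self N p).symm⟩
  have hcoeff : ((X + 1 : R[X]) ^ (p ^ a * m) - (X ^ (p ^ a * m) + 1)).coeff (p ^ a) = (m : R) := by
    rw [coeff_sub, coeff_add, coeff_X_add_one_pow_pow_mul, coeff_X_pow, if_neg (hpow a).symm,
      coeff_one, if_neg (pow_ne_zero a (Fact.out : p.Prime).ne_zero), add_zero, sub_zero]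
  intro h
  rw [h, coeff_zero] at hcoeff
  exact hpm ((CharP.cast_eq_zero_iff R p m).mp hcoeff.symm)

theorem natDegree_X_add_one_pow_sub_lt {R : Type*} [CommRing R] [Nontrivial R] {N : ℕ}
    (hN : N ≠ 0) : ((X + 1 : R[X]) ^ N - (X ^ N + 1)).natDegree < N := by
  have hX1 : IsMonicOfDegree ((X + 1 : R[X]) ^ N) N := by
    simpa using (isMonicOfDegree_X_add_one (1 : R)).pow N
  exact hX1.natDegree_sub_lt hN ((isMonicOfDegree_X_pow R N).add_right (by simpa using hN.bot_lt))

theorem AdjoinRoot.injOn_mk_degree_lt {R : Type*} [CommRing R] [IsDomain R] (f : R[X]) :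
    Set.InjOn (mk f) {h | h.degree < f.degree} := by
  intro g hg h hh hgh
  refine sub_eq_zero.mp (eq_zero_of_dvd_of_degree_lt (mk_eq_mk.mp hgh) ?_)
  exact (degree_sub_le g h).trans_lt (max_lt hg hh)

theorem ncard_dvd_comp_le_natDegree {K : Type*} [Field K] {f g : K[X]} (hf : Irreducible f)
    (hg : g ≠ 0) : {h : K[X] | h.degree < f.degree ∧ f ∣ g.comp h}.ncard ≤ g.natDegree := by
  have := Fact.mk hf
  calc _ ≤ (g.rootSet (AdjoinRoot f)).ncard := by
        refine Set.ncard_le_ncard_of_injOn (AdjoinRoot.mk f) ?_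
          ((AdjoinRoot.injOn_mk_degree_lt f).mono fun _ ↦ And.left) (rootSet_finite g _)
        rintro h ⟨-, hdvd⟩
        rw [mem_rootSet_of_ne hg, ← AdjoinRoot.coe_mkₐ, aeval_algHom_apply, ← comp_eq_aeval,
          AdjoinRoot.coe_mkₐ]
        exact AdjoinRoot.mk_eq_zero.mpr hdvd
    _ ≤ g.natDegree := ncard_rootSet_le g _

theorem stmt_3_general (N : ℕ) (hN : 1 < N) (p : ℕ) (hp : p.Prime)
    (hpow : ∀ k : ℕ, N ≠ p ^ k)
    (f : Polynomial (ZMod p)) (hf : Irreducible f) :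
    {h : Polynomial (ZMod p) |
      h.degree < f.degree ∧ f ∣ ((h + 1) ^ N - (h ^ N + 1))}.ncard < N := by
  have : Fact p.Prime := ⟨hp⟩
  set G : (ZMod p)[X] := (X + 1) ^ N - (X ^ N + 1)
  calc _ = {h | h.degree < f.degree ∧ f ∣ G.comp h}.ncard := by
        simp only [G, sub_comp, add_comp, pow_comp, X_comp, one_comp]
    _ ≤ G.natDegree := ncard_dvd_comp_le_natDegree hf (X_add_one_pow_sub_ne_zero (by omega) hpow)
    _ < N := natDegree_X_add_one_pow_sub_lt (by omega)

/-- Let `N > 1` be composite, `p` a prime dividing `N` with `N` not a power of `p`, and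
`f ∈ (ℤ/pℤ)[x]` irreducible. The number of polynomials `h` with `deg h < deg f` such that
`(h+1)^N ≡ h^N + 1 (mod f)` in `(ℤ/pℤ)[x]` is less than `N`. -/
theorem stmt_3 (N : ℕ) (hN : 1 < N) (hcomp : ¬ N.Prime) (p : ℕ) (hp : p.Prime)
    (hpN : p ∣ N) (hpow : ∀ k : ℕ, N ≠ p ^ k)
    (f : Polynomial (ZMod p)) (hf : Irreducible f) :
    {h : Polynomial (ZMod p) |
      h.degree < f.degree ∧ f ∣ ((h + 1) ^ N - (h ^ N + 1))}.ncard < N :=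
  stmt_3_general N hN p hp hpow f hf
end

section
/- Let N > 1 be a composite integer and let p be a prime dividing N such that N is not a power of p. Let f ∈ (ℤ/Nℤ)[x] be a monic polynomial of degree D ≥ 1 whose reduction modulo p is irreducible in (ℤ/pℤ)[x]. Then the number M of polynomials h ∈ (ℤ/Nℤ)[x] with deg h < D such that (h(x) + 1)^N ≡ h(x)^N + 1 (mod f(x)) in (ℤ/Nℤ)[x] satisfies M · p^D < N^{D+1}; equivalently, a uniformly random polynomial h of degree less than D over ℤ/Nℤ satisfies the congruence with probability less than N / p^D. -/
/-!
Reduce modulo `p`. A passing `h` reduces to a passing residue modulo `f̄ = f mod p`, and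
since `deg h < D` the reduction map has fibres of size at most `(N / p) ^ D`. In the field
`K = 𝔽_p[x]/(f̄)` a passing residue becomes a root of `(X + 1) ^ N - (X ^ N + 1)`; writing
`N = p ^ a * m` with `p ∤ m`, this polynomial has coefficient `m ≠ 0` at `X ^ p ^ a` in
characteristic `p` (here `m ≥ 2` because `N` is not a power of `p`), and degree `< N`.
So fewer than `N` residues pass modulo `p`, and `M * p ^ D < N * (N / p) ^ D * p ^ D = N ^ (D + 1)`.
-/

open Polynomial

namespace Polynomial

variable {R : Type*} [CommRing R] {N : ℕ}

theorem add_one_pow_sub_ne_zero (p : ℕ) [Fact p.Prime] [CharP R p]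
    (hN : N ≠ 0) (hpow : ∀ a, N ≠ p ^ a) :
    ((X + 1 : R[X]) ^ N - (X ^ N + 1)) ≠ 0 := by
  set a := N.factorization p
  set m := N / p ^ a
  have hNam : p ^ a * m = N := Nat.ordProj_mul_ordCompl_eq_self N p
  have hpm : ¬ p ∣ m := Nat.not_dvd_ordCompl Fact.out hN
  have hpa : 0 < p ^ a := pow_pos (Fact.out : p.Prime).pos a
  have hm : 2 ≤ m := by
    rcases m with _ | _ | m
    · omega
    · exact absurd (by simpa using hNam.symm) (hpow a)
    · omega
  -- `(X + 1) ^ N = (X ^ p ^ a + 1) ^ m` in characteristic `p`: its `X ^ p ^ a`-coefficient is `m`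
  have hexpand : (X + 1 : R[X]) ^ N = expand R (p ^ a) ((X + 1) ^ m) := by
    rw [map_pow, map_add, expand_X, map_one, ← hNam, pow_mul, add_pow_char_pow, one_pow]
  intro h
  have hcoeff := congrArg (coeff · (p ^ a * 1)) (sub_eq_zero.mp h)
  simp only [hexpand, coeff_expand_mul' hpa, coeff_X_add_one_pow, Nat.choose_one_right,
    coeff_add, coeff_X_pow, coeff_one] at hcoeff
  rw [if_neg (by nlinarith), if_neg (by positivity), add_zero, CharP.cast_eq_zero_iff R p] at hcoeff
  exact hpm hcoeff

theorem natDegree_add_one_pow_sub_lt [Nontrivial R] (hN : N ≠ 0) :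
    ((X + 1 : R[X]) ^ N - (X ^ N + 1)).natDegree < N := by
  have hpow := (isMonicOfDegree_X_add_one (1 : R)).pow N
  rw [C_1, one_mul] at hpow
  exact hpow.natDegree_sub_lt hN
    ((isMonicOfDegree_X_pow R N).add_right (by simpa using Nat.pos_of_ne_zero hN))

end Polynomial

section Roots

variable {K : Type*} [CommRing K] [IsDomain K] (p : ℕ) [Fact p.Prime] [CharP K p] {N : ℕ}

theorem setOf_add_one_pow_eq_subset_rootSet (hN : N ≠ 0) (hpow : ∀ a, N ≠ p ^ a) :
    {x : K | (x + 1) ^ N = x ^ N + 1} ⊆ ((X + 1 : K[X]) ^ N - (X ^ N + 1)).rootSet K := by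
  intro x hx
  rw [mem_rootSet]
  exact ⟨add_one_pow_sub_ne_zero p hN hpow, by simpa [sub_eq_zero] using hx⟩

theorem finite_setOf_add_one_pow_eq (hN : N ≠ 0) (hpow : ∀ a, N ≠ p ^ a) :
    {x : K | (x + 1) ^ N = x ^ N + 1}.Finite :=
  (rootSet_finite _ K).subset (setOf_add_one_pow_eq_subset_rootSet p hN hpow)

theorem ncard_setOf_add_one_pow_eq_lt (hN : N ≠ 0) (hpow : ∀ a, N ≠ p ^ a) :
    {x : K | (x + 1) ^ N = x ^ N + 1}.ncard < N :=
  calc {x : K | (x + 1) ^ N = x ^ N + 1}.ncard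
        ≤ (((X + 1 : K[X]) ^ N - (X ^ N + 1)).rootSet K).ncard :=
        Set.ncard_le_ncard (setOf_add_one_pow_eq_subset_rootSet p hN hpow) (rootSet_finite _ K)
    _ ≤ ((X + 1 : K[X]) ^ N - (X ^ N + 1)).natDegree := ncard_rootSet_le _ K
    _ < N := natDegree_add_one_pow_sub_lt hN

end Roots

def agrawalBiswasPassSet {R : Type*} [CommRing R] (f : R[X]) (N : ℕ) : Set R[X] :=
  {h | h.degree < f.degree ∧ f ∣ (h + 1) ^ N - (h ^ N + 1)}

section PassSet

variable {R S : Type*} [CommRing R] [CommRing S] {N : ℕ}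

theorem mapsTo_map_agrawalBiswasPassSet [Nontrivial S] (φ : R →+* S) {f : R[X]} (hf : f.Monic) :
    Set.MapsTo (map φ) (agrawalBiswasPassSet f N) (agrawalBiswasPassSet (f.map φ) N) := by
  rintro h ⟨hdeg, hdvd⟩
  refine ⟨(degree_map_le).trans_lt (hf.degree_map φ ▸ hdeg), ?_⟩
  simpa [Polynomial.map_sub, Polynomial.map_add, Polynomial.map_pow] using
    Polynomial.map_dvd φ hdvd

theorem mapsTo_mk_agrawalBiswasPassSet (g : R[X]) :
    Set.MapsTo (AdjoinRoot.mk g) (agrawalBiswasPassSet g N)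
      {x | (x + 1) ^ N = x ^ N + 1} := by
  rintro h ⟨-, hdvd⟩
  simpa [sub_eq_zero] using AdjoinRoot.mk_eq_zero.mpr hdvd

theorem injOn_mk_agrawalBiswasPassSet [NoZeroDivisors R] (g : R[X]) :
    Set.InjOn (AdjoinRoot.mk g) (agrawalBiswasPassSet g N) := by
  intro h₁ hh₁ h₂ hh₂ heq
  refine sub_eq_zero.mp (eq_zero_of_dvd_of_degree_lt (AdjoinRoot.mk_eq_mk.mp heq) ?_)
  exact (degree_sub_le _ _).trans_lt (max_lt hh₁.1 hh₂.1)

end PassSet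

section FieldPassSet

variable {k : Type*} [Field k] (p : ℕ) [Fact p.Prime] [CharP k p] {g : k[X]}
  [Fact (Irreducible g)] {N : ℕ}

instance AdjoinRoot.charP : CharP (AdjoinRoot g) p :=
  charP_of_injective_algebraMap (algebraMap k _).injective p

theorem finite_agrawalBiswasPassSet (hN : N ≠ 0) (hpow : ∀ a, N ≠ p ^ a) :
    (agrawalBiswasPassSet g N).Finite :=
  (finite_setOf_add_one_pow_eq p hN hpow).of_injOn (mapsTo_mk_agrawalBiswasPassSet g)
    (injOn_mk_agrawalBiswasPassSet g)

theorem ncard_agrawalBiswasPassSet_lt (hN : N ≠ 0) (hpow : ∀ a, N ≠ p ^ a) :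
    (agrawalBiswasPassSet g N).ncard < N :=
  (Set.ncard_le_ncard_of_injOn _ (mapsTo_mk_agrawalBiswasPassSet g)
    (injOn_mk_agrawalBiswasPassSet g) (finite_setOf_add_one_pow_eq p hN hpow)).trans_lt
    (ncard_setOf_add_one_pow_eq_lt p hN hpow)

end FieldPassSet

theorem ncard_le_ncard_mul_card_ker_pow {R S : Type*} [CommRing R] [CommRing S] [Finite R]
    (φ : R →+* S) {A : Set R[X]} {B : Set S[X]} {D : ℕ} (hB : B.Finite)
    (hA : ∀ h ∈ A, h.degree < D) (hAB : Set.MapsTo (map φ) A B) :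
    A.ncard ≤ B.ncard * Nat.card (RingHom.ker φ) ^ D := by
  have : Finite B := hB
  -- a chosen lift of each value of `φ` splits every coefficient into a lift and a kernel part
  let lift : S → R := Function.invFun φ
  have hlift (x : R) : φ (lift (φ x)) = φ x := Function.invFun_eq ⟨x, rfl⟩
  let F : A → B × (Fin D → RingHom.ker φ) := fun h =>
    (⟨h.1.map φ, hAB h.2⟩,
      fun i => ⟨h.1.coeff i - lift (φ (h.1.coeff i)), by simp [RingHom.mem_ker, hlift]⟩)
  have hF : Function.Injective F := by
    rintro ⟨h₁, hh₁⟩ ⟨h₂, hh₂⟩ heq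
    simp only [F, Prod.mk.injEq, Subtype.mk.injEq, funext_iff] at heq
    obtain ⟨hmap, hker⟩ := heq
    refine Subtype.ext (Polynomial.ext fun n => ?_)
    by_cases hn : n < D
    · have hφ : φ (h₁.coeff n) = φ (h₂.coeff n) := by simpa using congrArg (coeff · n) hmap
      simpa [hφ] using hker ⟨n, hn⟩
    · rw [coeff_eq_zero_of_degree_lt ((hA _ hh₁).trans_le (by exact_mod_cast not_lt.mp hn)),
        coeff_eq_zero_of_degree_lt ((hA _ hh₂).trans_le (by exact_mod_cast not_lt.mp hn))]
  simpa [Nat.card_coe_set_eq, Nat.card_fun] using Nat.card_le_card_of_injective F hF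

theorem card_ker_mul_card_eq {R S : Type*} [Ring R] [Ring S] {φ : R →+* S}
    (hφ : Function.Surjective φ) :
    Nat.card (RingHom.ker φ) * Nat.card S = Nat.card R := by
  rw [Submodule.card_eq_card_quotient_mul_card (RingHom.ker φ),
    Nat.card_congr (RingHom.quotientKerEquivOfSurjective hφ).toEquiv]

theorem stmt_4_general (N : ℕ) (hN : 1 < N) (p : ℕ) (hp : p.Prime)
    (hpN : p ∣ N) (hpow : ∀ k : ℕ, N ≠ p ^ k)
    (D : ℕ) (f : Polynomial (ZMod N)) (hmonic : f.Monic)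
    (hdeg : f.natDegree = D)
    (hirr : Irreducible (f.map (ZMod.castHom hpN (ZMod p)))) :
    {h : Polynomial (ZMod N) |
      h.degree < (D : WithBot ℕ) ∧ f ∣ ((h + 1) ^ N - (h ^ N + 1))}.ncard * p ^ D
      < N ^ (D + 1) := by
  set φ := ZMod.castHom hpN (ZMod p)
  have : Fact p.Prime := ⟨hp⟩
  have : Fact (1 < N) := ⟨hN⟩
  have : Fact (Irreducible (f.map φ)) := ⟨hirr⟩
  have hN0 : N ≠ 0 := by omega
  have hfdeg : f.degree = D := by rw [degree_eq_natDegree hmonic.ne_zero, hdeg]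
  have hker : Nat.card (RingHom.ker φ) * p = N := by
    simpa only [Nat.card_zmod] using card_ker_mul_card_eq (ZMod.castHom_surjective hpN)
  rw [← hfdeg]
  calc (agrawalBiswasPassSet f N).ncard * p ^ D
      ≤ (agrawalBiswasPassSet (f.map φ) N).ncard
          * Nat.card (RingHom.ker φ) ^ D * p ^ D :=
        Nat.mul_le_mul_right _ <| ncard_le_ncard_mul_card_ker_pow _
          (finite_agrawalBiswasPassSet p hN0 hpow) (fun h hh => hfdeg ▸ hh.1)
          (mapsTo_map_agrawalBiswasPassSet _ hmonic)
    _ = (agrawalBiswasPassSet (f.map φ) N).ncard * N ^ D := by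
        rw [mul_assoc, ← mul_pow, hker]
    _ < N * N ^ D :=
        Nat.mul_lt_mul_of_pos_right (ncard_agrawalBiswasPassSet_lt p hN0 hpow) (by positivity)
    _ = N ^ (D + 1) := (pow_succ' N D).symm

/-- Let `N > 1` be composite, `p` a prime dividing `N` with `N` not a power of `p`, and
`f ∈ (ℤ/Nℤ)[x]` monic of degree `D ≥ 1` whose reduction mod `p` is irreducible. Then the
number `M` of polynomials `h ∈ (ℤ/Nℤ)[x]` with `deg h < D` such that
`(h+1)^N ≡ h^N + 1 (mod f)` satisfies `M * p^D < N^(D+1)`. -/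
theorem stmt_4 (N : ℕ) (hN : 1 < N) (hcomp : ¬ N.Prime) (p : ℕ) (hp : p.Prime)
    (hpN : p ∣ N) (hpow : ∀ k : ℕ, N ≠ p ^ k)
    (D : ℕ) (hD : 1 ≤ D) (f : Polynomial (ZMod N)) (hmonic : f.Monic)
    (hdeg : f.natDegree = D)
    (hirr : Irreducible (f.map (ZMod.castHom hpN (ZMod p)))) :
    {h : Polynomial (ZMod N) |
      h.degree < (D : WithBot ℕ) ∧ f ∣ ((h + 1) ^ N - (h ^ N + 1))}.ncard * p ^ D
      < N ^ (D + 1) :=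
  stmt_4_general N hN p hp hpN hpow D f hmonic hdeg hirr
end

section
/- Let N be an odd composite number with prime factorization N = p_1^{e_1} ⋯ p_r^{e_r}, where the p_i are distinct primes and e_i ≥ 1, and write N − 1 = 2^s · t with t odd. Let W be the number of units a ∈ (ℤ/Nℤ)^× such that a^t = 1 or a^{2^j t} = −1 for some integer j with 0 ≤ j ≤ s − 1 (the Miller–Rabin nonwitnesses for N). Then 2^{r−1} · (∏_{i=1}^r p_i^{e_i − 1}) · W ≤ N − 1; in particular, the Miller–Rabin test applied to N fails with probability at most 1 / (2^{r−1} · ∏_{i=1}^r p_i^{e_i − 1}). -/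
/-!
Let `m = 2 ^ k * t`, where `k` is the largest `j < s` for which some unit `b` has
`b ^ (2 ^ j * t) = -1`. Every nonwitness then satisfies `a ^ m = ±1`, so the nonwitnesses lie in
`K ∪ b K`, where `K` is the `m`-torsion of `(ℤ/Nℤ)ˣ`. By the Chinese remainder theorem `K` embeds
into the product of the `m`-torsion subgroups `Kᵢ` of `(ℤ/pᵢ^eᵢℤ)ˣ`. As `m` is prime to `pᵢ`,
reduction mod `pᵢ` is injective on `Kᵢ` (its kernel is a `pᵢ`-group), and the image is a proper
subgroup of `(ℤ/pᵢℤ)ˣ` because `b ^ m = -1 ≠ 1` there. Hence `2 pᵢ^(eᵢ-1) |Kᵢ| ≤ φ(pᵢ^eᵢ)`, and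
multiplying over `i` gives `2^(r-1) ∏ pᵢ^(eᵢ-1) W ≤ φ(N) < N`.
-/

open Finset Function

def millerRabinNonwitnesses (M : Type*) [Monoid M] [HasDistribNeg M] (s t : ℕ) : Set M :=
  {a | a ^ t = 1 ∨ ∃ j < s, a ^ (2 ^ j * t) = -1}

section MillerRabin

variable {M : Type*} [Monoid M] [HasDistribNeg M]

lemma pow_two_pow_mul_eq_one_or_neg_one {a : M} {j k t : ℕ} (h : a ^ (2 ^ j * t) = -1)
    (hjk : j ≤ k) : a ^ (2 ^ k * t) = 1 ∨ a ^ (2 ^ k * t) = -1 := by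
  obtain ⟨d, rfl⟩ := Nat.exists_eq_add_of_le hjk
  rw [pow_add, mul_right_comm, pow_mul, h]
  rcases d with _ | d
  · simp
  · exact Or.inl ((even_two.pow_of_ne_zero d.succ_ne_zero).neg_one_pow)

lemma exists_millerRabinNonwitnesses_subset (s : ℕ) {t : ℕ} (ht : Odd t) :
    ∃ k, ∃ b : M, b ^ (2 ^ k * t) = -1 ∧
      millerRabinNonwitnesses M s t ⊆ {a | a ^ (2 ^ k * t) = 1 ∨ a ^ (2 ^ k * t) = -1} := by
  classical
  let P : ℕ → Prop := fun j => ∃ b : M, b ^ (2 ^ j * t) = -1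
  have hP0 : P 0 := ⟨-1, by simpa using ht.neg_one_pow⟩
  obtain ⟨b, hb⟩ : P (Nat.findGreatest P (s - 1)) := Nat.findGreatest_spec (Nat.zero_le _) hP0
  refine ⟨_, b, hb, ?_⟩
  rintro a (h | ⟨j, hj, h⟩)
  · left
    rw [mul_comm, pow_mul, h, one_pow]
  · exact pow_two_pow_mul_eq_one_or_neg_one h (Nat.le_findGreatest (by omega) ⟨a, h⟩)

end MillerRabin

lemma Subgroup.eq_one_of_pow_eq_one_of_coprime {G : Type*} [Group G] {H : Subgroup G} {m : ℕ}
    (hm : (Nat.card H).Coprime m) {x : G} (hx : x ∈ H) (h : x ^ m = 1) : x = 1 := by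
  have := (Nat.Coprime.pow_left_bijective hm).injective
    (a₁ := (⟨x, hx⟩ : H)) (a₂ := 1) (Subtype.ext (by simpa using h))
  simpa using congrArg Subtype.val this

section PowerTorsion

variable {G : Type*} [CommGroup G]

lemma two_mul_card_ker_powMonoidHom_le [Finite G] {m : ℕ} {b : G} (hb : b ^ m ≠ 1) :
    2 * Nat.card (powMonoidHom m : G →* G).ker ≤ Nat.card G := by
  have hK : (powMonoidHom m : G →* G).ker ≠ ⊤ := fun h => hb (by
    rw [← powMonoidHom_apply, ← MonoidHom.mem_ker, h]; exact Subgroup.mem_top b)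
  set K := (powMonoidHom m : G →* G).ker
  calc 2 * Nat.card K ≤ K.index * Nat.card K :=
        Nat.mul_le_mul_right _ (Subgroup.one_lt_index_of_ne_top hK)
    _ = Nat.card G := by rw [mul_comm, K.card_mul_index]

lemma ncard_pow_eq_one_or_eq_pow_le [Finite G] (m : ℕ) (b : G) :
    {a : G | a ^ m = 1 ∨ a ^ m = b ^ m}.ncard ≤ 2 * Nat.card (powMonoidHom m : G →* G).ker := by
  set K : Set G := ((powMonoidHom m : G →* G).ker : Set G)
  have hsub : {a : G | a ^ m = 1 ∨ a ^ m = b ^ m} ⊆ K ∪ (b * ·) '' K := by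
    rintro a (ha | ha)
    · exact Or.inl ha
    · refine Or.inr ⟨b⁻¹ * a, ?_, mul_inv_cancel_left b a⟩
      simp [K, mul_pow, ha]
  calc _ ≤ (K ∪ (b * ·) '' K).ncard := Set.ncard_le_ncard hsub (Set.toFinite _)
    _ ≤ K.ncard + ((b * ·) '' K).ncard := Set.ncard_union_le _ _
    _ ≤ K.ncard + K.ncard := Nat.add_le_add_left (Set.ncard_image_le (Set.toFinite _)) _
    _ = _ := by rw [two_mul, ← Nat.card_coe_set_eq]; rfl

lemma card_ker_powMonoidHom_le_prod_of_injective {ι : Type*} [Fintype ι] {H : ι → Type*}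
    [∀ i, CommGroup (H i)] [∀ i, Finite (H i)] (f : G →* ∀ i, H i) (hf : Injective f) (m : ℕ) :
    Nat.card (powMonoidHom m : G →* G).ker ≤
      ∏ i, Nat.card (powMonoidHom m : H i →* H i).ker := by
  rw [← Nat.card_pi]
  refine Nat.card_le_card_of_injective
    (fun x i => ⟨f x i, by simpa using congrFun (congrArg f x.2) i⟩) ?_
  intro x y hxy
  exact Subtype.ext (hf (funext fun i => congrArg Subtype.val (congrFun hxy i)))

lemma card_ker_powMonoidHom_le_of_coprime_card_ker {H : Type*} [CommGroup H] [Finite H]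
    (f : G →* H) {m : ℕ} (hm : (Nat.card f.ker).Coprime m) :
    Nat.card (powMonoidHom m : G →* G).ker ≤ Nat.card (powMonoidHom m : H →* H).ker := by
  refine Nat.card_le_card_of_injective
    (fun x => ⟨f x, by simpa using congrArg f x.2⟩) ?_
  intro x y hxy
  have hker : (x : G) * (y : G)⁻¹ ∈ f.ker := by
    simpa [mul_inv_eq_one] using congrArg Subtype.val hxy
  have hpow : ((x : G) * (y : G)⁻¹) ^ m = 1 := by
    simp [mul_pow, show (x : G) ^ m = 1 from x.2, show (y : G) ^ m = 1 from y.2]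
  exact Subtype.ext (mul_inv_eq_one.mp (Subgroup.eq_one_of_pow_eq_one_of_coprime hm hker hpow))

end PowerTorsion

namespace ZMod

lemma natCard_units_prime_pow {p e : ℕ} (hp : p.Prime) (he : e ≠ 0) :
    Nat.card (ZMod (p ^ e))ˣ = p ^ (e - 1) * (p - 1) := by
  have : NeZero (p ^ e) := ⟨pow_ne_zero _ hp.ne_zero⟩
  rw [Nat.card_eq_fintype_card, card_units_eq_totient, Nat.totient_prime_pow hp (by omega)]

lemma natCard_ker_unitsMap_prime_pow {p e : ℕ} (hp : p.Prime) (he : e ≠ 0) :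
    Nat.card (unitsMap (dvd_pow_self p he)).ker = p ^ (e - 1) := by
  have : NeZero (p ^ e) := ⟨pow_ne_zero _ hp.ne_zero⟩
  have : Fact p.Prime := ⟨hp⟩
  have h := (unitsMap (dvd_pow_self p he)).ker.card_mul_index
  rw [Subgroup.index_ker, MonoidHom.range_eq_top.mpr (unitsMap_surjective _), Subgroup.card_top,
    natCard_units_prime_pow hp he, Nat.card_eq_fintype_card (α := (ZMod p)ˣ), card_units] at h
  exact Nat.eq_of_mul_eq_mul_right (Nat.sub_pos_of_lt hp.one_lt) h

lemma unitsMap_neg_one_ne_one {m n : ℕ} (h : n ∣ m) (hn : 2 < n) : unitsMap h (-1) ≠ 1 := by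
  have : Fact (2 < n) := ⟨hn⟩
  rw [unitsMap_def, Units.map_neg_one, Ne, Units.ext_iff]
  exact neg_one_ne_one

lemma two_mul_prime_pow_mul_card_ker_powMonoidHom_le {p e m : ℕ} (hp : p.Prime) (he : e ≠ 0)
    (hpm : p.Coprime m) {b : (ZMod p)ˣ} (hb : b ^ m ≠ 1) :
    2 * p ^ (e - 1) * Nat.card (powMonoidHom m : (ZMod (p ^ e))ˣ →* _).ker ≤
      Nat.card (ZMod (p ^ e))ˣ := by
  have : Fact p.Prime := ⟨hp⟩
  have hlift := card_ker_powMonoidHom_le_of_coprime_card_ker (unitsMap (dvd_pow_self p he)) (m := m)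
    (by rw [natCard_ker_unitsMap_prime_pow hp he]; exact hpm.pow_left _)
  have hproper := two_mul_card_ker_powMonoidHom_le hb
  rw [Nat.card_eq_fintype_card (α := (ZMod p)ˣ), card_units] at hproper
  calc _ = p ^ (e - 1) * (2 * Nat.card (powMonoidHom m : (ZMod (p ^ e))ˣ →* _).ker) := by ring
    _ ≤ p ^ (e - 1) * (p - 1) := by gcongr; exact (Nat.mul_le_mul_left 2 hlift).trans hproper
    _ = _ := (natCard_units_prime_pow hp he).symm

noncomputable def unitsEquivPi {ι : Type*} [Fintype ι] (a : ι → ℕ)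
    (h : Pairwise (Nat.Coprime on a)) : (ZMod (∏ i, a i))ˣ ≃* Π i, (ZMod (a i))ˣ :=
  (Units.mapEquiv (prodEquivPi a h).toMulEquiv).trans MulEquiv.piUnits

end ZMod

lemma two_pow_pred_mul_prod_mul_le {r w : ℕ} (hr : r ≠ 0) {a c u : Fin r → ℕ}
    (hw : w ≤ 2 * ∏ i, c i) (h : ∀ i, 2 * a i * c i ≤ u i) :
    2 ^ (r - 1) * (∏ i, a i) * w ≤ ∏ i, u i :=
  calc _ ≤ 2 ^ (r - 1) * (∏ i, a i) * (2 * ∏ i, c i) := by gcongr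
    _ = ∏ i, 2 * a i * c i := by
        rw [prod_mul_distrib, prod_mul_distrib, prod_const, card_univ, Fintype.card_fin,
          ← (pow_sub_one_mul hr 2 : 2 ^ (r - 1) * 2 = 2 ^ r)]
        ring
    _ ≤ ∏ i, u i := prod_le_prod' fun i _ => h i

lemma Nat.Prime.two_lt_of_dvd_of_odd {p n : ℕ} (hp : p.Prime) (hn : Odd n) (hpn : p ∣ n) :
    2 < p := by
  have := Nat.odd_iff.mp (hn.of_dvd_nat hpn)
  have := hp.two_le
  omega

lemma Nat.Prime.coprime_two_pow_mul_of_dvd {p n s t : ℕ} (hp : p.Prime) (hn : Odd n) (hpn : p ∣ n)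
    (hst : n - 1 = 2 ^ s * t) (k : ℕ) : p.Coprime (2 ^ k * t) := by
  have hp2 : p.Coprime 2 :=
    (Nat.coprime_primes hp Nat.prime_two).mpr (hp.two_lt_of_dvd_of_odd hn hpn).ne'
  have hpt : p.Coprime t :=
    (((Nat.coprime_self_sub_right hn.pos).mpr (Nat.coprime_one_right n)).coprime_dvd_left
      hpn).coprime_dvd_right (hst ▸ dvd_mul_left t _)
  exact (hp2.pow_right k).mul_right hpt

theorem stmt_6_general (N : ℕ) (hodd : Odd N) (hN : 1 < N)
    (r : ℕ) (p e : Fin r → ℕ) (hp : ∀ i, (p i).Prime) (hinj : Function.Injective p)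
    (he : ∀ i, 1 ≤ e i) (hNfact : N = ∏ i, p i ^ e i)
    (s t : ℕ) (ht : Odd t) (hst : N - 1 = 2 ^ s * t) :
    2 ^ (r - 1) * (∏ i, p i ^ (e i - 1)) *
      {a : (ZMod N)ˣ | (a : ZMod N) ^ t = 1 ∨
        ∃ j < s, (a : ZMod N) ^ (2 ^ j * t) = -1}.ncard ≤ N - 1 := by
  have hunits_lt : Nat.card (ZMod N)ˣ < N := by
    have : Fact (1 < N) := ⟨hN⟩
    simpa using natCard_units_lt (ZMod N)
  have hW : {a : (ZMod N)ˣ | (a : ZMod N) ^ t = 1 ∨ ∃ j < s, (a : ZMod N) ^ (2 ^ j * t) = -1} =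
      millerRabinNonwitnesses (ZMod N)ˣ s t := by
    ext a; simp [millerRabinNonwitnesses, Units.ext_iff]
  obtain ⟨k, b, hb, hsub⟩ := exists_millerRabinNonwitnesses_subset (M := (ZMod N)ˣ) s ht
  have hcount := (Set.ncard_le_ncard hsub (Set.toFinite _)).trans
    (hb ▸ ncard_pow_eq_one_or_eq_pow_le (2 ^ k * t) b)
  have hr : r ≠ 0 := by rintro rfl; simp_all
  have he0 : ∀ i, e i ≠ 0 := fun i => Nat.one_le_iff_ne_zero.mp (he i)
  have hpN : ∀ i, p i ∣ N := fun i =>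
    hNfact ▸ (dvd_pow_self _ (he0 i)).trans (dvd_prod_of_mem _ (mem_univ i))
  have hlocal := fun i => ZMod.two_mul_prime_pow_mul_card_ker_powMonoidHom_le (hp i) (he0 i)
    ((hp i).coprime_two_pow_mul_of_dvd hodd (hpN i) hst k) (b := ZMod.unitsMap (hpN i) b) (by
      rw [← map_pow, hb]
      exact ZMod.unitsMap_neg_one_ne_one _ ((hp i).two_lt_of_dvd_of_odd hodd (hpN i)))
  have hcop : Pairwise (Nat.Coprime on fun i => p i ^ e i) := fun i j hij =>
    .pow _ _ ((Nat.coprime_primes (hp i) (hp j)).mpr (hinj.ne hij))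
  subst hNfact
  have hCRT := card_ker_powMonoidHom_le_prod_of_injective
    (ZMod.unitsEquivPi _ hcop).toMonoidHom (ZMod.unitsEquivPi _ hcop).injective (2 ^ k * t)
  have hunits : Nat.card (ZMod (∏ i, p i ^ e i))ˣ = ∏ i, Nat.card (ZMod (p i ^ e i))ˣ := by
    rw [Nat.card_congr (ZMod.unitsEquivPi _ hcop).toEquiv, Nat.card_pi]
  rw [hW]
  have := two_pow_pred_mul_prod_mul_le hr (hcount.trans (by gcongr)) hlocal
  omega

/-- Let `N = ∏ i, p i ^ e i` be an odd composite number with distinct prime factors `p i`,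
and write `N - 1 = 2^s * t` with `t` odd. The number `W` of Miller–Rabin nonwitnesses,
i.e. units `a` of `ℤ/Nℤ` with `a^t = 1` or `a^(2^j t) = -1` for some `0 ≤ j ≤ s - 1`,
satisfies `2^(r-1) * (∏ i, p i ^ (e i - 1)) * W ≤ N - 1`. -/
theorem stmt_6 (N : ℕ) (hodd : Odd N) (hN : 1 < N) (hcomp : ¬ N.Prime)
    (r : ℕ) (p e : Fin r → ℕ) (hp : ∀ i, (p i).Prime) (hinj : Function.Injective p)
    (he : ∀ i, 1 ≤ e i) (hNfact : N = ∏ i, p i ^ e i)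
    (s t : ℕ) (ht : Odd t) (hst : N - 1 = 2 ^ s * t) :
    2 ^ (r - 1) * (∏ i, p i ^ (e i - 1)) *
      {a : (ZMod N)ˣ | (a : ZMod N) ^ t = 1 ∨
        ∃ j < s, (a : ZMod N) ^ (2 ^ j * t) = -1}.ncard ≤ N - 1 :=
  stmt_6_general N hodd hN r p e hp hinj he hNfact s t ht hst
end

section
/- Let N be an odd composite number with prime factorization N = p_1^{e_1} ⋯ p_r^{e_r}, where the p_i are r ≥ 2 distinct primes and e_i ≥ 1, and write N − 1 = 2^s t with t odd. Let f ∈ (ℤ/Nℤ)[x] be monic of degree D ≥ 1 whose reduction modulo p_i is irreducible for every i. Let W be the number of units a ∈ (ℤ/Nℤ)^× with a^t = 1 or a^{2^j t} = −1 for some 0 ≤ j ≤ s−1, and let B be the number of polynomials h ∈ (ℤ/Nℤ)[x] with deg h < D such that (h(x)+1)^N ≡ h(x)^N + 1 (mod f(x)). Then 2^{(r−1)D} · W^D · B < (N−1)^D · N^r. (Hence the combined algorithm that runs D independent Miller–Rabin tests and one modified Agrawal–Biswas test fails with probability less than 1 / (2^{(r−1) D} · N^{D − r}).) -/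
open Polynomial

/-
Let `m = 2^j t` with `j ≤ s` maximal such that some unit `b` has `b^m = -1`. Every Miller–Rabin
nonwitness satisfies `a^m = ±1`, and reduction modulo the `p i` is injective on each class
`a^m = ε`: a quotient `c` of two elements of the class has `c^(N-1) = 1` and is `≡ 1` modulo
every prime factor of `N`, which (lifting the exponent) forces `c^N = 1`, hence `c = 1`. Modulo
`p i` the classes `x^m = 1` and `x^m = -1` are disjoint nonempty fibres of `x ↦ x^m` (the second
contains `b`), so they have equal size, at most `(p i - 1)/2`; hence `2^(r-1) W ≤ ∏ (p i - 1)`.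

For the Agrawal–Biswas test write `N = p^v M_i` with `p = p i ∤ M_i`. In the field
`𝔽_p[x]/(f mod p)` the Frobenius turns `(z+1)^N = z^N + 1` into `(z+1)^M_i = z^M_i + 1`, an
equation of degree at most `M_i` which is not trivial since the coefficient of `z^(M_i-1)` is
`M_i ≠ 0` (and `M_i ≥ 2` because `r ≥ 2`). So the reductions of the
bad `h` take at most `∏ M_i` values, and each fibre of the reduction has at most
`(N / ∏ p i)^D` elements. It remains to note `∏ (p i - 1) · N / ∏ p i ≤ N - 1` and
`∏ M_i < N^r`.
-/

theorem Nat.prod_primes_dvd_of_injective {ι : Type*} [Fintype ι] {p : ι → ℕ}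
    (hp : ∀ i, (p i).Prime) (hinj : Function.Injective p) {n : ℕ} (h : ∀ i, p i ∣ n) :
    ∏ i, p i ∣ n := by
  classical
  have := Finset.prod_primes_dvd (s := Finset.univ.image p) n
    (by simpa using fun i => (hp i).prime) (by simpa using h)
  rwa [Finset.prod_image hinj.injOn] at this

theorem Nat.exists_eq_of_prime_dvd_prod_pow {ι : Type*} [Fintype ι] {p e : ι → ℕ}
    (hp : ∀ i, (p i).Prime) {q : ℕ} (hq : q.Prime) (hdvd : q ∣ ∏ i, p i ^ e i) : ∃ i, p i = q := by
  obtain ⟨i, -, hi⟩ := (Prime.dvd_finsetProd_iff hq.prime _).mp hdvd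
  exact ⟨i, ((Nat.prime_dvd_prime_iff_eq hq (hp i)).mp (hq.dvd_of_dvd_pow hi)).symm⟩

theorem Nat.prod_sub_one_mul_div_prod_le {ι : Type*} [Fintype ι] [Nonempty ι] {p : ι → ℕ}
    (hp : ∀ i, (p i).Prime) {n : ℕ} (hn : n ≠ 0) (hdvd : ∏ i, p i ∣ n) :
    (∏ i, (p i - 1)) * (n / ∏ i, p i) ≤ n - 1 := by
  set P := ∏ i, p i
  have hlt : ∏ i, (p i - 1) < P := Finset.prod_lt_prod_of_nonempty
    (fun i _ => Nat.sub_pos_of_lt (hp i).one_lt) (fun i _ => Nat.sub_lt (hp i).pos one_pos)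
    Finset.univ_nonempty
  have hquot : 0 < n / P := Nat.div_pos (Nat.le_of_dvd (Nat.pos_of_ne_zero hn) hdvd)
    (Finset.prod_pos fun i _ => (hp i).pos)
  calc (∏ i, (p i - 1)) * (n / P) ≤ (P - 1) * (n / P) := Nat.mul_le_mul_right _ (by omega)
    _ = n - n / P := by rw [Nat.sub_mul, one_mul, Nat.mul_div_cancel' hdvd]
    _ ≤ n - 1 := by omega

theorem Nat.two_le_ordCompl_of_prime_dvd {p q n : ℕ} (hp : p.Prime) (hq : q.Prime) (hpq : p ≠ q)
    (hn : n ≠ 0) (hqn : q ∣ n) : 2 ≤ ordCompl[p] n :=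
  hq.two_le.trans <| Nat.le_of_dvd (Nat.ordCompl_pos p hn) <|
    Nat.dvd_ordCompl_of_dvd_not_dvd hqn fun h => hpq ((Nat.prime_dvd_prime_iff_eq hp hq).mp h)

theorem Nat.ordCompl_lt {p n : ℕ} (hp : p.Prime) (hn : n ≠ 0) (hpn : p ∣ n) :
    ordCompl[p] n < n :=
  Nat.div_lt_self (Nat.pos_of_ne_zero hn)
    (Nat.one_lt_pow (hp.factorization_pos_of_dvd hn hpn).ne' hp.one_lt)

theorem Set.ncard_univ_pi {ι : Type*} [Fintype ι] {α : ι → Type*} (s : ∀ i, Set (α i)) :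
    (Set.pi Set.univ s).ncard = ∏ i, (s i).ncard := by
  simp_rw [← _root_.Nat.card_coe_set_eq]
  rw [Nat.card_congr (Equiv.Set.univPi s), Nat.card_pi]

namespace ZMod

theorem ncard_setOf_dvd_val_le {n d : ℕ} [NeZero n] (hd : d ∣ n) :
    {c : ZMod n | d ∣ c.val}.ncard ≤ n / d := by
  classical
  have hsub : {c : ZMod n | d ∣ c.val} ⊆
      (Finset.range (n / d)).image fun k => ((d * k : ℕ) : ZMod n) := by
    rintro c ⟨k, hk⟩
    refine Finset.mem_image.mpr ⟨k, ?_, by rw [← hk, ZMod.natCast_zmod_val]⟩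
    rw [Finset.mem_range, Nat.lt_div_iff_mul_lt' hd, ← hk]
    exact ZMod.val_lt c
  refine (Set.ncard_le_ncard hsub (Finset.finite_toSet _)).trans ?_
  rw [Set.ncard_coe_finset]
  exact Finset.card_image_le.trans_eq (Finset.card_range _)

theorem pow_self_eq_one_of_castHom_eq_one {n : ℕ} {x : ZMod n}
    (hx : ∀ q, q.Prime → (hq : q ∣ n) → ZMod.castHom hq (ZMod q) x = 1) : x ^ n = 1 := by
  obtain ⟨a, rfl⟩ := ZMod.intCast_surjective x
  suffices (n : ℤ) ∣ a ^ n - 1 by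
    rw [← sub_eq_zero]
    exact_mod_cast (ZMod.intCast_zmod_eq_zero_iff_dvd _ n).mpr this
  rw [Int.natCast_dvd, Nat.dvd_iff_prime_pow_dvd_dvd]
  intro q k hq hqk
  rw [← Int.natCast_dvd]
  rcases k.eq_zero_or_pos with rfl | hk
  · simp
  have hqa : (q : ℤ) ∣ a - 1 := by
    have := hx q hq ((dvd_pow_self q hk.ne').trans hqk)
    rw [map_intCast, ← Int.cast_one, ZMod.intCast_eq_intCast_iff_dvd_sub] at this
    rwa [← dvd_neg, neg_sub]
  have hlift := dvd_sub_pow_of_dvd_sub hqa (k - 1)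
  rw [Nat.sub_add_cancel hk, one_pow] at hlift
  obtain ⟨l, hl⟩ := (pow_dvd_pow q (Nat.sub_le k 1)).trans hqk
  push_cast
  refine hlift.trans ?_
  rw [hl, pow_mul]
  simpa using sub_dvd_pow_sub_pow (a ^ q ^ (k - 1)) 1 l

theorem units_eq_one_of_unitsMap_eq_one {n : ℕ} [NeZero n] {c : (ZMod n)ˣ}
    (hc : c ^ (n - 1) = 1) (hq : ∀ q, q.Prime → (hq : q ∣ n) → ZMod.unitsMap hq c = 1) :
    c = 1 := by
  have hn : c ^ n = 1 := by
    ext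
    push_cast
    refine pow_self_eq_one_of_castHom_eq_one fun q hqp hqn => ?_
    have := congrArg Units.val (hq q hqp hqn)
    rwa [ZMod.unitsMap_val, Units.val_one] at this
  calc c = c ^ (n - 1 + 1) * (c ^ (n - 1))⁻¹ := by group
    _ = 1 := by rw [Nat.sub_add_cancel NeZero.one_le, hn, hc, inv_one, one_mul]

end ZMod

theorem exists_nonwitness_pow_eq_one_or_neg_one {G : Type*} [Monoid G] [HasDistribNeg G] {t : ℕ}
    (ht : Odd t) (s : ℕ) :
    ∃ j ≤ s, (∃ b : G, b ^ (2 ^ j * t) = -1) ∧ ∀ a : G,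
      (a ^ t = 1 ∨ ∃ i < s, a ^ (2 ^ i * t) = -1) → a ^ (2 ^ j * t) = 1 ∨ a ^ (2 ^ j * t) = -1 := by
  classical
  let P : ℕ → Prop := fun j => ∃ b : G, b ^ (2 ^ j * t) = -1
  have hP0 : P 0 := ⟨-1, by rw [pow_zero, one_mul, ht.neg_one_pow]⟩
  refine ⟨Nat.findGreatest P s, Nat.findGreatest_le s,
    Nat.findGreatest_spec (Nat.zero_le s) hP0, ?_⟩
  set j := Nat.findGreatest P s
  rintro a (ha | ⟨i, his, ha⟩)
  · left
    rw [mul_comm, pow_mul, ha, one_pow]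
  · obtain hij | rfl := (Nat.le_findGreatest (P := P) his.le ⟨a, ha⟩).lt_or_eq
    · left
      rw [show 2 ^ j * t = 2 ^ i * t * 2 ^ (j - i) by
        rw [mul_right_comm, ← pow_add, Nat.add_sub_cancel' hij.le], pow_mul, ha,
        (Nat.even_pow.mpr ⟨even_two, by omega⟩).neg_one_pow]
    · exact Or.inr ha

theorem two_mul_ncard_pow_eq_le {G : Type*} [CommGroup G] [Finite G] {m : ℕ} {y : G}
    (hy : y ^ m ≠ 1) (ε : G) : 2 * {x : G | x ^ m = ε}.ncard ≤ Nat.card G := by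
  classical
  have := Fintype.ofFinite G
  let f := powMonoidHom (α := G) m
  have hfib : ∀ δ ∈ Set.range f, {x : G | x ^ m = δ}.ncard = {x : G | x ^ m = 1}.ncard :=
    fun δ hδ => by
      simp_rw [Set.ncard_eq_toFinset_card', Set.toFinset_ofPred]
      exact MonoidHom.card_fiber_eq_of_mem_range f hδ ⟨1, map_one f⟩
  by_cases hε : ε ∈ Set.range f
  · have hdisj : Disjoint {x : G | x ^ m = 1} {x : G | x ^ m = y ^ m} :=
      Set.disjoint_left.mpr fun x h1 h2 => hy (h2.symm.trans h1)
    calc 2 * {x : G | x ^ m = ε}.ncard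
        = {x : G | x ^ m = 1}.ncard + {x : G | x ^ m = y ^ m}.ncard := by
          rw [hfib ε hε, hfib (y ^ m) ⟨y, rfl⟩, two_mul]
      _ = ({x : G | x ^ m = 1} ∪ {x : G | x ^ m = y ^ m}).ncard :=
          (Set.ncard_union_eq hdisj).symm
      _ ≤ Nat.card G := by rw [← Set.ncard_univ]; exact Set.ncard_le_ncard (Set.subset_univ _)
  · have : {x : G | x ^ m = ε} = ∅ := Set.eq_empty_of_forall_notMem fun x hx => hε ⟨x, hx⟩
    simp [this]

namespace ZMod

variable {N : ℕ} [NeZero N] {ι : Type*} [Fintype ι] {p : ι → ℕ}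

theorem ncard_pow_eq_le_prod (hdvd : ∀ i, p i ∣ N)
    (hprimes : ∀ q, q.Prime → q ∣ N → ∃ i, p i = q) {m : ℕ} (hm : m ∣ N - 1) (ε : (ZMod N)ˣ) :
    {a : (ZMod N)ˣ | a ^ m = ε}.ncard ≤
      ∏ i, {x : (ZMod (p i))ˣ | x ^ m = ZMod.unitsMap (hdvd i) ε}.ncard := by
  have (i : ι) : NeZero (p i) := ⟨ne_zero_of_dvd_ne_zero (NeZero.ne N) (hdvd i)⟩
  rw [← Set.ncard_univ_pi]
  refine Set.ncard_le_ncard_of_injOn (fun a i => ZMod.unitsMap (hdvd i) a)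
    (fun a ha i _ => by rw [Set.mem_ofPred_eq, ← map_pow, ha]) ?_
  intro a ha a' ha' haa'
  rw [← mul_inv_eq_one]
  refine units_eq_one_of_unitsMap_eq_one ?_ fun q hq hqN => ?_
  · obtain ⟨k, hk⟩ := hm
    rw [hk, pow_mul, mul_pow, inv_pow, ha, ha', mul_inv_cancel, one_pow]
  · obtain ⟨i, rfl⟩ := hprimes q hq hqN
    rw [map_mul, map_inv, mul_inv_eq_one]
    exact congrFun haa' i

theorem two_pow_card_mul_ncard_pow_eq_le (hodd : Odd N) (hp : ∀ i, (p i).Prime)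
    (hdvd : ∀ i, p i ∣ N) (hprimes : ∀ q, q.Prime → q ∣ N → ∃ i, p i = q) {m : ℕ}
    (hm : m ∣ N - 1) {b : (ZMod N)ˣ} (hb : b ^ m = -1) (ε : (ZMod N)ˣ) :
    2 ^ Fintype.card ι * {a : (ZMod N)ˣ | a ^ m = ε}.ncard ≤ ∏ i, (p i - 1) := by
  have (i : ι) : Fact (p i).Prime := ⟨hp i⟩
  have hy (i : ι) : ZMod.unitsMap (hdvd i) b ^ m ≠ 1 := by
    have : Fact (2 < p i) := ⟨(hp i).two_le.lt_of_ne' fun h2 =>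
      Nat.not_even_iff_odd.mpr hodd (even_iff_two_dvd.mpr (h2 ▸ hdvd i))⟩
    have : ZMod.castHom (hdvd i) (ZMod (p i)) (-1) ≠ 1 := by
      rw [map_neg, map_one]
      exact ZMod.neg_one_ne_one
    rwa [← map_pow, hb, Ne, Units.ext_iff, ZMod.unitsMap_val, Units.val_neg, Units.val_one,
      Units.val_one]
  calc 2 ^ Fintype.card ι * {a : (ZMod N)ˣ | a ^ m = ε}.ncard
      ≤ 2 ^ Fintype.card ι * ∏ i, {x : (ZMod (p i))ˣ | x ^ m = ZMod.unitsMap (hdvd i) ε}.ncard :=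
        Nat.mul_le_mul_left _ (ncard_pow_eq_le_prod hdvd hprimes hm ε)
    _ = ∏ i, 2 * {x : (ZMod (p i))ˣ | x ^ m = ZMod.unitsMap (hdvd i) ε}.ncard := by
        rw [Finset.prod_mul_distrib, Finset.prod_const, Finset.card_univ]
    _ ≤ ∏ i, (p i - 1) := Finset.prod_le_prod' fun i _ =>
        (two_mul_ncard_pow_eq_le (hy i) _).trans_eq
          (by rw [Nat.card_eq_fintype_card, ZMod.card_units])

theorem two_pow_card_mul_ncard_nonwitness_le (hodd : Odd N) (hp : ∀ i, (p i).Prime)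
    (hdvd : ∀ i, p i ∣ N) (hprimes : ∀ q, q.Prime → q ∣ N → ∃ i, p i = q) {s t : ℕ}
    (ht : Odd t) (hst : N - 1 = 2 ^ s * t) :
    2 ^ Fintype.card ι * {a : (ZMod N)ˣ | (a : ZMod N) ^ t = 1 ∨
        ∃ j < s, (a : ZMod N) ^ (2 ^ j * t) = -1}.ncard ≤ 2 * ∏ i, (p i - 1) := by
  obtain ⟨j, hjs, ⟨b, hb⟩, hnonwit⟩ :=
    exists_nonwitness_pow_eq_one_or_neg_one (G := (ZMod N)ˣ) ht s
  have hm : 2 ^ j * t ∣ N - 1 := hst ▸ mul_dvd_mul_right (pow_dvd_pow 2 hjs) t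
  have hclass := two_pow_card_mul_ncard_pow_eq_le hodd hp hdvd hprimes hm hb
  have hsub : {a : (ZMod N)ˣ | (a : ZMod N) ^ t = 1 ∨ ∃ j < s, (a : ZMod N) ^ (2 ^ j * t) = -1}
      ⊆ {a | a ^ (2 ^ j * t) = 1} ∪ {a | a ^ (2 ^ j * t) = -1} := fun a ha => hnonwit a (by
    simpa only [Units.ext_iff, Units.val_pow_eq_pow_val, Units.val_one, Units.val_neg] using ha.out)
  calc _ ≤ 2 ^ Fintype.card ι * ({a : (ZMod N)ˣ | a ^ (2 ^ j * t) = 1}.ncard +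
        {a : (ZMod N)ˣ | a ^ (2 ^ j * t) = -1}.ncard) :=
        Nat.mul_le_mul_left _ ((Set.ncard_le_ncard hsub).trans (Set.ncard_union_le _ _))
    _ ≤ 2 * ∏ i, (p i - 1) := by linarith [hclass 1, hclass (-1)]

end ZMod

section Frobenius

variable {K : Type*} [Field K]

theorem add_one_pow_sub_ne_zero {M : ℕ} (hM : 2 ≤ M) (hMK : (M : K) ≠ 0) :
    ((X + 1) ^ M - (X ^ M + 1) : K[X]) ≠ 0 := by
  intro h0
  have hcoeff := congrArg (coeff · (M - 1)) h0
  simp only [coeff_sub, coeff_add, coeff_X_add_one_pow, coeff_X_pow, coeff_one, coeff_zero,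
    if_neg (by omega : M - 1 ≠ M), if_neg (by omega : M - 1 ≠ 0),
    Nat.choose_symm_of_eq_add (by omega : M = (M - 1) + 1), Nat.choose_one_right] at hcoeff
  exact hMK (by simpa using hcoeff)

theorem setOf_add_one_pow_eq_subset_roots [DecidableEq K] (p : ℕ) [Fact p.Prime] [CharP K p]
    {n : ℕ} (hn : n ≠ 0) (hM : 2 ≤ ordCompl[p] n) :
    {z : K | (z + 1) ^ n = z ^ n + 1} ⊆
      ((X + 1) ^ ordCompl[p] n - (X ^ ordCompl[p] n + 1) : K[X]).roots.toFinset := by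
  intro z hz
  set M := ordCompl[p] n
  have hMK : (M : K) ≠ 0 := by
    rw [Ne, CharP.cast_eq_zero_iff K p]
    exact Nat.not_dvd_ordCompl Fact.out hn
  have hfrob : ((z + 1) ^ M - (z ^ M + 1)) ^ p ^ n.factorization p = 0 := by
    rw [sub_pow_char_pow, add_pow_char_pow, one_pow, ← pow_mul, ← pow_mul, mul_comm,
      Nat.ordProj_mul_ordCompl_eq_self, hz, sub_self]
  simp only [Finset.mem_coe, Multiset.mem_toFinset, mem_roots (add_one_pow_sub_ne_zero hM hMK),
    IsRoot, eval_sub, eval_add, eval_pow, eval_X, eval_one]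
  exact pow_eq_zero_iff (pow_ne_zero _ (Fact.out : p.Prime).ne_zero) |>.mp hfrob

end Frobenius

namespace Polynomial

theorem ncard_setOf_dvd_add_one_pow_sub_le {k : Type*} [Field k] (p : ℕ) [Fact p.Prime]
    [CharP k p] {f : k[X]} (hf : Irreducible f) {n : ℕ} (hn : n ≠ 0) (hM : 2 ≤ ordCompl[p] n) :
    {h : k[X] | h.degree < f.degree ∧ f ∣ (h + 1) ^ n - (h ^ n + 1)}.ncard ≤ ordCompl[p] n := by
  classical
  have := Fact.mk hf
  have : CharP (AdjoinRoot f) p := charP_of_injective_algebraMap' k p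
  set g : (AdjoinRoot f)[X] := (X + 1) ^ ordCompl[p] n - (X ^ ordCompl[p] n + 1)
  refine (Set.ncard_le_ncard_of_injOn (AdjoinRoot.mk f) (fun h hh => ?_) ?_
    (Finset.finite_toSet g.roots.toFinset)).trans ?_
  · refine setOf_add_one_pow_eq_subset_roots p hn hM (sub_eq_zero.mp ?_)
    simpa using AdjoinRoot.mk_eq_zero.mpr hh.2
  · rintro g ⟨hg, -⟩ h ⟨hh, -⟩ hgh
    refine sub_eq_zero.mp (eq_zero_of_dvd_of_degree_lt (AdjoinRoot.mk_eq_mk.mp hgh) ?_)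
    exact (degree_sub_le g h).trans_lt (max_lt hg hh)
  · rw [Set.ncard_coe_finset]
    refine (Multiset.toFinset_card_le _).trans ((card_roots' _).trans ?_)
    simp only [g]
    compute_degree

variable {R : Type*} [CommRing R]

theorem eq_of_degree_lt_of_coeff_eq {D : ℕ} {g h : R[X]} (hg : g.degree < D) (hh : h.degree < D)
    (hcoeff : ∀ k : Fin D, g.coeff k = h.coeff k) : g = h := by
  ext k
  by_cases hk : k < D
  · exact hcoeff ⟨k, hk⟩
  · have hDk : (D : WithBot ℕ) ≤ k := by exact_mod_cast not_lt.mp hk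
    rw [coeff_eq_zero_of_degree_lt (hg.trans_le hDk), coeff_eq_zero_of_degree_lt (hh.trans_le hDk)]

theorem finite_setOf_degree_lt [Finite R] (D : ℕ) : {h : R[X] | h.degree < D}.Finite :=
  Set.Finite.of_finite_image (Set.toFinite ((fun h (k : Fin D) => h.coeff k) '' _))
    fun _ hg _ hh hgh => eq_of_degree_lt_of_coeff_eq hg hh (congrFun hgh)

theorem ncard_le_prod_ncard_mul_ncard_pow [Finite R] {ι : Type*} [Fintype ι] {S : ι → Type*}
    [∀ i, CommRing (S i)] (φ : ∀ i, R →+* S i) {U : ∀ i, Set (S i)[X]} (hU : ∀ i, (U i).Finite)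
    {D : ℕ} {T : Set R[X]} (hT : ∀ h ∈ T, h.degree < D ∧ ∀ i, h.map (φ i) ∈ U i) :
    T.ncard ≤ (∏ i, (U i).ncard) * {c : R | ∀ i, φ i c = 0}.ncard ^ D := by
  set κ := {c : R | ∀ i, φ i c = 0}
  let Φ : R[X] → ∀ i, (S i)[X] := fun h i => h.map (φ i)
  let rep := Function.invFunOn Φ T
  -- `h` is recorded by its reductions and the coefficients of `h - rep (Φ h)`, which lie in `κ`
  let code : R[X] → (∀ i, (S i)[X]) × (Fin D → R) :=
    fun h => (Φ h, fun k => (h - rep (Φ h)).coeff k)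
  have hrep : ∀ h ∈ T, rep (Φ h) ∈ T ∧ Φ (rep (Φ h)) = Φ h := fun h hh =>
    ⟨Function.invFunOn_mem ⟨h, hh, rfl⟩, Function.invFunOn_eq ⟨h, hh, rfl⟩⟩
  have hdeg : ∀ h ∈ T, (h - rep (Φ h)).degree < D := fun h hh =>
    (degree_sub_le _ _).trans_lt (max_lt (hT h hh).1 (hT _ (hrep h hh).1).1)
  have hmaps : ∀ h ∈ T, code h ∈ Set.pi Set.univ U ×ˢ Set.pi Set.univ fun _ : Fin D => κ := by
    refine fun h hh => ⟨fun i _ => (hT h hh).2 i, fun k _ i => ?_⟩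
    have hi := congrFun (hrep h hh).2 i
    rw [← coeff_map, Polynomial.map_sub, sub_eq_zero.mpr hi.symm, coeff_zero]
  have hinj : Set.InjOn code T := by
    intro g hg h hh hgh
    obtain ⟨hΦ, hcoeff⟩ : Φ g = Φ h ∧ _ := Prod.ext_iff.mp hgh
    have := eq_of_degree_lt_of_coeff_eq (hdeg g hg) (hdeg h hh) (congrFun hcoeff)
    rwa [hΦ, sub_left_inj] at this
  have hfin : (Set.pi Set.univ U ×ˢ Set.pi Set.univ fun _ : Fin D => κ).Finite :=
    (Set.Finite.pi fun i => hU i).prod (Set.toFinite _)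
  refine (Set.ncard_le_ncard_of_injOn code hmaps hinj hfin).trans_eq ?_
  rw [Set.ncard_prod, Set.ncard_univ_pi, Set.ncard_univ_pi, Finset.prod_const, Finset.card_univ,
    Fintype.card_fin]

end Polynomial

theorem ZMod.ncard_setOf_dvd_add_one_pow_sub_le_prod {N : ℕ} [NeZero N] {ι : Type*} [Fintype ι]
    {p : ι → ℕ} (hp : ∀ i, (p i).Prime) (hinj : Function.Injective p) (hdvd : ∀ i, p i ∣ N)
    (hM : ∀ i, 2 ≤ ordCompl[p i] N) {f : (ZMod N)[X]} (hmonic : f.Monic)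
    (hirr : ∀ i, Irreducible (f.map (ZMod.castHom (hdvd i) (ZMod (p i))))) :
    {h : (ZMod N)[X] | h.degree < f.natDegree ∧ f ∣ (h + 1) ^ N - (h ^ N + 1)}.ncard ≤
      (∏ i, ordCompl[p i] N) * (N / ∏ i, p i) ^ f.natDegree := by
  have (i : ι) : Fact (p i).Prime := ⟨hp i⟩
  set φ := fun i => ZMod.castHom (hdvd i) (ZMod (p i))
  have hdeg (i : ι) : (f.map (φ i)).degree = f.natDegree := by
    rw [degree_eq_natDegree (hmonic.map _).ne_zero, hmonic.natDegree_map]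
  set U := fun i => {g : (ZMod (p i))[X] |
    g.degree < (f.map (φ i)).degree ∧ f.map (φ i) ∣ (g + 1) ^ N - (g ^ N + 1)}
  have hU (i : ι) : (U i).Finite :=
    (finite_setOf_degree_lt (R := ZMod (p i)) f.natDegree).subset fun g hg => (hdeg i).symm ▸ hg.1
  refine (ncard_le_prod_ncard_mul_ncard_pow φ hU fun h hh => ⟨hh.1, fun i => ⟨?_, ?_⟩⟩).trans ?_
  · exact degree_map_le.trans_lt (hdeg i ▸ hh.1)
  · simpa using Polynomial.map_dvd (φ i) hh.2
  gcongr ?_ * ?_ ^ _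
  · exact Finset.prod_le_prod' fun i _ =>
      ncard_setOf_dvd_add_one_pow_sub_le (p i) (hirr i) (NeZero.ne N) (hM i)
  · refine (Set.ncard_le_ncard (fun c hc => ?_) (Set.toFinite _)).trans
      (ZMod.ncard_setOf_dvd_val_le (Nat.prod_primes_dvd_of_injective hp hinj hdvd))
    refine Nat.prod_primes_dvd_of_injective hp hinj fun i => ?_
    rw [← ZMod.natCast_eq_zero_iff, ← ZMod.cast_eq_val]
    exact hc i

theorem stmt_7_general (N : ℕ) (hodd : Odd N) (hN : 1 < N)
    (r : ℕ) (hr : 2 ≤ r) (p e : Fin r → ℕ) (hp : ∀ i, (p i).Prime)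
    (hinj : Function.Injective p) (hNfact : N = ∏ i, p i ^ e i)
    (hdvd : ∀ i, p i ∣ N)
    (s t : ℕ) (ht : Odd t) (hst : N - 1 = 2 ^ s * t)
    (D : ℕ) (f : Polynomial (ZMod N)) (hmonic : f.Monic)
    (hdeg : f.natDegree = D)
    (hirr : ∀ i, Irreducible (f.map (ZMod.castHom (hdvd i) (ZMod (p i))))) :
    2 ^ ((r - 1) * D) *
      {a : (ZMod N)ˣ | (a : ZMod N) ^ t = 1 ∨
        ∃ j < s, (a : ZMod N) ^ (2 ^ j * t) = -1}.ncard ^ D *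
      {h : Polynomial (ZMod N) |
        h.degree < (D : WithBot ℕ) ∧ f ∣ ((h + 1) ^ N - (h ^ N + 1))}.ncard
      < (N - 1) ^ D * N ^ r := by
  subst hdeg
  have hN0 : N ≠ 0 := by omega
  have : NeZero N := ⟨hN0⟩
  have : Nontrivial (Fin r) := Fin.nontrivial_iff_two_le.mpr hr
  have hW := ZMod.two_pow_card_mul_ncard_nonwitness_le hodd hp hdvd
    (fun q hq hqN => Nat.exists_eq_of_prime_dvd_prod_pow hp hq (hNfact ▸ hqN)) ht hst
  rw [Fintype.card_fin, show 2 ^ r = 2 * 2 ^ (r - 1) by rw [← pow_succ']; congr 1; omega,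
    mul_assoc] at hW
  have hM (i : Fin r) : 2 ≤ ordCompl[p i] N := by
    obtain ⟨j, hji⟩ := exists_ne i
    exact Nat.two_le_ordCompl_of_prime_dvd (hp i) (hp j) (hinj.ne hji.symm) hN0 (hdvd j)
  have hB := ZMod.ncard_setOf_dvd_add_one_pow_sub_le_prod hp hinj hdvd hM hmonic hirr
  have hφ := Nat.prod_sub_one_mul_div_prod_le (ι := Fin r) hp hN0
    (Nat.prod_primes_dvd_of_injective hp hinj hdvd)
  have hMN : ∏ i, ordCompl[p i] N < N ^ r := by
    simpa using Finset.prod_lt_prod_of_nonempty (fun i _ => Nat.ordCompl_pos (p i) hN0)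
      (fun i _ => Nat.ordCompl_lt (hp i) hN0 (hdvd i)) Finset.univ_nonempty
  calc _ = (2 ^ (r - 1) * _) ^ f.natDegree * _ := by rw [mul_pow, pow_mul]
    _ ≤ (∏ i, (p i - 1)) ^ f.natDegree *
          ((∏ i, ordCompl[p i] N) * (N / ∏ i, p i) ^ f.natDegree) :=
        Nat.mul_le_mul (Nat.pow_le_pow_left (Nat.le_of_mul_le_mul_left hW two_pos) _) hB
    _ = ((∏ i, (p i - 1)) * (N / ∏ i, p i)) ^ f.natDegree * ∏ i, ordCompl[p i] N := by ring
    _ < (N - 1) ^ f.natDegree * N ^ r :=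
        Nat.mul_lt_mul_of_le_of_lt (Nat.pow_le_pow_left hφ _) hMN (pow_pos (by omega) _)

/-- Let `N = ∏ i, p i ^ e i` be an odd composite number with `r ≥ 2` distinct prime factors,
write `N - 1 = 2^s * t` with `t` odd, and let `f ∈ (ℤ/Nℤ)[x]` be monic of degree `D ≥ 1`
with irreducible reduction modulo each `p i`. If `W` is the number of Miller–Rabin
nonwitnesses and `B` is the number of polynomials `h` with `deg h < D` such that
`(h+1)^N ≡ h^N + 1 (mod f)`, then `2^((r-1)D) * W^D * B < (N-1)^D * N^r`. -/
theorem stmt_7 (N : ℕ) (hodd : Odd N) (hN : 1 < N) (hcomp : ¬ N.Prime)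
    (r : ℕ) (hr : 2 ≤ r) (p e : Fin r → ℕ) (hp : ∀ i, (p i).Prime)
    (hinj : Function.Injective p) (he : ∀ i, 1 ≤ e i) (hNfact : N = ∏ i, p i ^ e i)
    (hdvd : ∀ i, p i ∣ N)
    (s t : ℕ) (ht : Odd t) (hst : N - 1 = 2 ^ s * t)
    (D : ℕ) (hD : 1 ≤ D) (f : Polynomial (ZMod N)) (hmonic : f.Monic)
    (hdeg : f.natDegree = D)
    (hirr : ∀ i, Irreducible (f.map (ZMod.castHom (hdvd i) (ZMod (p i))))) :
    2 ^ ((r - 1) * D) *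
      {a : (ZMod N)ˣ | (a : ZMod N) ^ t = 1 ∨
        ∃ j < s, (a : ZMod N) ^ (2 ^ j * t) = -1}.ncard ^ D *
      {h : Polynomial (ZMod N) |
        h.degree < (D : WithBot ℕ) ∧ f ∣ ((h + 1) ^ N - (h ^ N + 1))}.ncard
      < (N - 1) ^ D * N ^ r :=
  stmt_7_general N hodd hN r hr p e hp hinj hNfact hdvd s t ht hst D f hmonic hdeg hirr
end

section
/- Let k be an odd positive integer such that p = 2k + 1 and q = 6k + 1 are both prime, let N = pq, and let t = k(3k + 2) (the odd part of N − 1). Then the number of units a ∈ (ℤ/Nℤ)^× satisfying a^t = 1 is at least φ(N)/12; that is, 12 · #{a ∈ (ℤ/Nℤ)^× : a^t = 1} ≥ φ(N), where φ is Euler's totient function. -/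
/-!
By the Chinese remainder theorem `(ℤ/Nℤ)ˣ ≅ (ℤ/pℤ)ˣ × (ℤ/qℤ)ˣ`, a product of cyclic
groups of orders `2k` and `6k`, and in a cyclic group of order `n` the equation `x ^ t = 1`
has exactly `gcd(n, t)` solutions. Since `k` divides `2k`, `6k` and `t`, there are at least
`k · k` solutions, while `φ(N) = 2k · 6k = 12 k²`.
-/

theorem IsCyclic.ncard_pow_eq_one {G : Type*} [CommGroup G] [IsCyclic G] [Finite G] (d : ℕ) :
    {x : G | x ^ d = 1}.ncard = (Nat.card G).gcd d := by
  rw [← IsCyclic.card_powMonoidHom_ker G d, ← Nat.card_coe_set_eq]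
  rfl

theorem MulEquiv.ncard_pow_eq_one {M N : Type*} [Monoid M] [Monoid N] (e : M ≃* N) (d : ℕ) :
    {x : M | x ^ d = 1}.ncard = {y : N | y ^ d = 1}.ncard := by
  rw [← Nat.card_coe_set_eq, ← Nat.card_coe_set_eq]
  exact Nat.card_congr <| e.toEquiv.subtypeEquiv fun x => by
    simp [← map_pow, e.map_eq_one_iff]

theorem Prod.ncard_pow_eq_one {M N : Type*} [Monoid M] [Monoid N] (d : ℕ) :
    {x : M × N | x ^ d = 1}.ncard = {x : M | x ^ d = 1}.ncard * {y : N | y ^ d = 1}.ncard := by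
  rw [← Set.ncard_prod]
  congr 1
  ext ⟨x, y⟩
  simp [Prod.ext_iff]

namespace ZMod

theorem ncard_units_pow_eq_one_mul {m n : ℕ} (hmn : m.Coprime n) (d : ℕ) :
    {a : (ZMod (m * n))ˣ | a ^ d = 1}.ncard =
      {a : (ZMod m)ˣ | a ^ d = 1}.ncard * {a : (ZMod n)ˣ | a ^ d = 1}.ncard := by
  let e : (ZMod (m * n))ˣ ≃* (ZMod m)ˣ × (ZMod n)ˣ :=
    (Units.mapEquiv (chineseRemainder hmn).toMulEquiv).trans MulEquiv.prodUnits
  rw [e.ncard_pow_eq_one, Prod.ncard_pow_eq_one]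

theorem ncard_units_pow_eq_one_of_prime (p : ℕ) [Fact p.Prime] (d : ℕ) :
    {a : (ZMod p)ˣ | a ^ d = 1}.ncard = (p - 1).gcd d := by
  rw [IsCyclic.ncard_pow_eq_one, Nat.card_eq_fintype_card, card_units]

end ZMod

theorem stmt_9_general (k : ℕ)
    (hp : Nat.Prime (2 * k + 1)) (hq : Nat.Prime (6 * k + 1))
    (N t : ℕ) (hN : N = (2 * k + 1) * (6 * k + 1)) (ht : t = k * (3 * k + 2)) :
    Nat.totient N ≤ 12 * {a : (ZMod N)ˣ | (a : ZMod N) ^ t = 1}.ncard := by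
  subst hN ht
  have := Fact.mk hp
  have := Fact.mk hq
  have hk : 0 < k := by linarith [hp.two_le]
  have hpq : (2 * k + 1).Coprime (6 * k + 1) := (Nat.coprime_primes hp hq).2 (by omega)
  have hk_le_gcd (c : ℕ) (hc : 0 < c) : k ≤ (c * k).gcd (k * (3 * k + 2)) :=
    Nat.le_of_dvd (Nat.gcd_pos_of_pos_left _ (by positivity))
      (Nat.dvd_gcd (dvd_mul_left k c) (dvd_mul_right k _))
  simp_rw [← Units.val_pow_eq_pow_val, Units.val_eq_one]
  rw [ZMod.ncard_units_pow_eq_one_mul hpq, ZMod.ncard_units_pow_eq_one_of_prime,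
    ZMod.ncard_units_pow_eq_one_of_prime, Nat.totient_mul hpq, Nat.totient_prime hp,
    Nat.totient_prime hq, Nat.add_sub_cancel, Nat.add_sub_cancel]
  calc 2 * k * (6 * k) = 12 * (k * k) := by ring
    _ ≤ _ := by gcongr <;> exact hk_le_gcd _ (by norm_num)

/-- Let `k` be an odd positive integer with `p = 2k+1` and `q = 6k+1` both prime,
`N = pq`, and `t = k(3k+2)` the odd part of `N - 1`. Then the number of units
`a ∈ (ℤ/Nℤ)ˣ` with `a^t = 1` is at least `φ(N)/12`. -/
theorem stmt_9 (k : ℕ) (hk : Odd k) (hk0 : 0 < k)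
    (hp : Nat.Prime (2 * k + 1)) (hq : Nat.Prime (6 * k + 1))
    (N t : ℕ) (hN : N = (2 * k + 1) * (6 * k + 1)) (ht : t = k * (3 * k + 2)) :
    Nat.totient N ≤ 12 * {a : (ZMod N)ˣ | (a : ZMod N) ^ t = 1}.ncard :=
  stmt_9_general k hp hq N t hN ht
end

section
/- Let k be an odd positive integer such that p = 2k + 1 and q = 6k + 1 are both prime, let N = pq, and let t = k(3k + 2) (the odd part of N − 1). Then 21 · #{a ∈ (ℤ/Nℤ)^× : a^t = 1} ≥ N − 1. In particular, since every unit a with a^t = 1 is a Miller–Rabin nonwitness for N, the Miller–Rabin test applied to N fails with probability at least 1/21. -/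
/-!
By the Chinese remainder theorem `(ZMod N)ˣ ≃* (ZMod p)ˣ × (ZMod q)ˣ`, a product of cyclic groups
of orders `2k` and `6k`, so `a ^ t = 1` has exactly `gcd(2k, t) * gcd(6k, t)` solutions. Both
factors are divisible by `k`, hence the count is at least `k²`, while `N - 1 = 12k² + 8k ≤ 21k²`.
-/

section PowEqOne

variable {G H : Type*}

theorem MulEquiv.card_pow_eq_one_congr [Monoid G] [Monoid H] (e : G ≃* H) (d : ℕ) :
    Nat.card {x : G // x ^ d = 1} = Nat.card {y : H // y ^ d = 1} :=
  Nat.card_congr <| e.toEquiv.subtypeEquiv fun x => by simp [← map_pow]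

theorem Prod.card_pow_eq_one [Monoid G] [Monoid H] (d : ℕ) :
    Nat.card {z : G × H // z ^ d = 1} =
      Nat.card {x : G // x ^ d = 1} * Nat.card {y : H // y ^ d = 1} := by
  rw [← Nat.card_prod]
  exact Nat.card_congr <| (Equiv.subtypeEquivRight fun z => by simp [Prod.ext_iff]).trans
    (Equiv.subtypeProdEquivProd)

theorem IsCyclic.card_pow_eq_one [CommGroup G] [IsCyclic G] [Finite G] (d : ℕ) :
    Nat.card {x : G // x ^ d = 1} = (Nat.card G).gcd d :=
  IsCyclic.card_powMonoidHom_ker G d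

end PowEqOne

namespace ZMod

theorem card_units_pow_eq_one_of_coprime {m n : ℕ} (h : m.Coprime n) (d : ℕ) :
    Nat.card {a : (ZMod (m * n))ˣ // a ^ d = 1} =
      Nat.card {a : (ZMod m)ˣ // a ^ d = 1} * Nat.card {a : (ZMod n)ˣ // a ^ d = 1} := by
  rw [← Prod.card_pow_eq_one]
  exact ((Units.mapEquiv (chineseRemainder h).toMulEquiv).trans
    MulEquiv.prodUnits).card_pow_eq_one_congr d

theorem card_units_pow_eq_one (p : ℕ) [Fact p.Prime] (d : ℕ) :
    Nat.card {a : (ZMod p)ˣ // a ^ d = 1} = (p - 1).gcd d := by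
  rw [IsCyclic.card_pow_eq_one, Nat.card_eq_fintype_card, card_units]

end ZMod

theorem stmt_10_general (k : ℕ)
    (hp : Nat.Prime (2 * k + 1)) (hq : Nat.Prime (6 * k + 1))
    (N t : ℕ) (hN : N = (2 * k + 1) * (6 * k + 1)) (ht : t = k * (3 * k + 2)) :
    N - 1 ≤ 21 * {a : (ZMod N)ˣ | (a : ZMod N) ^ t = 1}.ncard := by
  have : Fact (2 * k + 1).Prime := ⟨hp⟩
  have : Fact (6 * k + 1).Prime := ⟨hq⟩
  have hk : 0 < k := by have := hp.two_le; omega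
  have hcop : (2 * k + 1).Coprime (6 * k + 1) := (Nat.coprime_primes hp hq).mpr (by omega)
  have hcount : {a : (ZMod N)ˣ | (a : ZMod N) ^ t = 1}.ncard =
      (2 * k).gcd t * (6 * k).gcd t := by
    rw [← Nat.card_coe_set_eq]
    simp only [Set.coe_ofPred, ← Units.val_pow_eq_pow_val, Units.val_eq_one]
    subst hN
    rw [ZMod.card_units_pow_eq_one_of_coprime hcop, ZMod.card_units_pow_eq_one,
      ZMod.card_units_pow_eq_one, Nat.add_sub_cancel, Nat.add_sub_cancel]
  have k_le_gcd (c : ℕ) (hc : 0 < c) : k ≤ (c * k).gcd t :=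
    Nat.le_of_dvd (Nat.gcd_pos_of_pos_left _ (by positivity))
      (Nat.dvd_gcd (dvd_mul_left k c) (ht ▸ dvd_mul_right k _))
  have h2 := k_le_gcd 2 two_pos
  have h6 := k_le_gcd 6 (by norm_num)
  rw [hcount, hN]
  calc (2 * k + 1) * (6 * k + 1) - 1 ≤ 21 * (k * k) := by
        rw [show (2 * k + 1) * (6 * k + 1) = 12 * (k * k) + 8 * k + 1 by ring,
          Nat.add_sub_cancel]
        nlinarith
    _ ≤ 21 * ((2 * k).gcd t * (6 * k).gcd t) := by gcongr

/-- Let `k` be an odd positive integer with `p = 2k+1` and `q = 6k+1` both prime,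
`N = pq`, and `t = k(3k+2)` the odd part of `N - 1`. Then
`21 * #{a ∈ (ℤ/Nℤ)ˣ : a^t = 1} ≥ N - 1`; in particular the Miller–Rabin test applied
to `N` fails with probability at least `1/21`. -/
theorem stmt_10 (k : ℕ) (hk : Odd k) (hk0 : 0 < k)
    (hp : Nat.Prime (2 * k + 1)) (hq : Nat.Prime (6 * k + 1))
    (N t : ℕ) (hN : N = (2 * k + 1) * (6 * k + 1)) (ht : t = k * (3 * k + 2)) :
    N - 1 ≤ 21 * {a : (ZMod N)ˣ | (a : ZMod N) ^ t = 1}.ncard :=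
  stmt_10_general k hp hq N t hN ht
end

section
/- Let p be a prime and let f ∈ (ℤ/pℤ)[x] be a monic polynomial of degree d ≥ 1. Let A denote the quotient ring (ℤ/pℤ)[x]/(f(x)) and let α be the image of x in A. Suppose there exist a ring automorphism σ of A and a natural number i coprime to d such that σ^i(α) = α^p, σ^d(α) = α, and for every prime number ℓ dividing d the element σ^{d/ℓ}(α) − α is a unit of A. Then f is irreducible over ℤ/pℤ. -/
/-!
Let `g` be an irreducible factor of `f` and `β` the image of `α` in the field `𝔽_p[x]/(g)`
of degree `e = deg g` over `𝔽_p`. The Frobenius of this field has order `e` and is determined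
by its value on `β`, so `β ^ p ^ m = β` exactly when `e ∣ m`. Since `i` is invertible modulo
`d`, there is a `j` with `σ^n(α) = α ^ p ^ (j * n)` for all `n`, while `σ^(i*d)(α)` shows
`α ^ p ^ d = α`; hence `e ∣ d`. If `e ≠ d`, then `e ∣ d / ℓ` for a prime `ℓ ∣ d`, and
`σ^(d/ℓ)(α) - α` maps to `0` in the field, although it is a unit. So every irreducible factor of
`f` has degree `deg f`.
-/

open Polynomial Function

theorem Nat.eq_of_dvd_of_forall_prime_not_dvd_div {e d : ℕ} (hed : e ∣ d)
    (h : ∀ ℓ : ℕ, ℓ.Prime → ℓ ∣ d → ¬ e ∣ d / ℓ) : e = d := by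
  obtain ⟨k, rfl⟩ := hed
  by_contra hne
  have hk : k ≠ 1 := by rintro rfl; exact hne (mul_one e).symm
  refine h k.minFac (Nat.minFac_prime hk) (dvd_mul_of_dvd_right k.minFac_dvd e) ?_
  rw [Nat.mul_div_assoc e k.minFac_dvd]
  exact dvd_mul_right e _

namespace RingAut

variable {R : Type*} [Semiring R] {σ : RingAut R} {a : R} {i d q : ℕ}

theorem pow_mul_apply_eq_pow_pow (hfrob : (σ ^ i) a = a ^ q) (n : ℕ) :
    (σ ^ (i * n)) a = a ^ q ^ n := by
  induction n with
  | zero => simp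
  | succ n ih => rw [mul_add_one, pow_add, mul_apply, hfrob, map_pow, ih, pow_succ, pow_mul]

theorem isPeriodicPt_of_pow_apply (hfix : (σ ^ d) a = a) : IsPeriodicPt σ d a := by
  rwa [IsPeriodicPt, IsFixedPt, ← coe_pow]

theorem pow_pow_eq_self (hfrob : (σ ^ i) a = a ^ q) (hfix : (σ ^ d) a = a) : a ^ q ^ d = a := by
  rw [← pow_mul_apply_eq_pow_pow hfrob, coe_pow]
  exact (isPeriodicPt_of_pow_apply hfix).const_mul i

theorem exists_pow_apply_eq_pow_pow (hd : d ≠ 0) (hi : i.Coprime d) (hfrob : (σ ^ i) a = a ^ q)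
    (hfix : (σ ^ d) a = a) : ∃ j, ∀ n, (σ ^ n) a = a ^ q ^ (j * n) := by
  obtain ⟨j, -, hj⟩ := Nat.exists_mul_mod_eq_of_coprime 1 hi hd
  refine ⟨j, fun n => ?_⟩
  have hper := isPeriodicPt_of_pow_apply hfix
  have hmod : i * (j * n) % d = n % d := by
    rw [← mul_assoc]; exact (Nat.ModEq.mul_right n hj).trans (by rw [one_mul])
  rw [← pow_mul_apply_eq_pow_pow hfrob, coe_pow, coe_pow, ← hper.iterate_mod_apply,
    ← hmod, hper.iterate_mod_apply]

end RingAut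

theorem AdjoinRoot.root_pow_card_pow_eq_self_iff {K : Type*} [Field K] [Fintype K] {g : K[X]}
    [Fact (Irreducible g)] {m : ℕ} :
    root g ^ Fintype.card K ^ m = root g ↔ g.natDegree ∣ m := by
  have hg : g ≠ 0 := (Fact.out : Irreducible g).ne_zero
  have : Module.Finite K (AdjoinRoot g) := (powerBasis hg).finite
  have : Finite (AdjoinRoot g) := Module.finite_of_finite K
  rw [← powerBasis_dim hg, ← PowerBasis.finrank, ← FiniteField.orderOf_frobeniusAlgHom,
    orderOf_dvd_iff_pow_eq_one]
  constructor
  · intro h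
    apply algHom_ext
    rw [AlgHom.coe_pow, FiniteField.coe_frobeniusAlgHom, pow_iterate, AlgHom.one_apply]
    exact h
  · intro h
    simpa [AlgHom.coe_pow, FiniteField.coe_frobeniusAlgHom, pow_iterate] using
      DFunLike.congr_fun h (root g)

open AdjoinRoot in
theorem Polynomial.natDegree_eq_of_irreducible_of_dvd {K : Type*} [Field K] [Fintype K]
    {f g : K[X]} {σ : RingAut (AdjoinRoot f)} {i d : ℕ} (hd : d ≠ 0) (hi : i.Coprime d)
    (hfrob : (σ ^ i) (root f) = root f ^ Fintype.card K) (hfix : (σ ^ d) (root f) = root f)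
    (hunit : ∀ ℓ : ℕ, ℓ.Prime → ℓ ∣ d → IsUnit ((σ ^ (d / ℓ)) (root f) - root f))
    (hg : Irreducible g) (hgf : g ∣ f) : g.natDegree = d := by
  have := Fact.mk hg
  let π := algHomOfDvd K f g hgf
  have hπ (n : ℕ) : π (root f ^ Fintype.card K ^ n) = root g ^ Fintype.card K ^ n := by
    rw [map_pow, algHomOfDvd_root]
  obtain ⟨j, hj⟩ := RingAut.exists_pow_apply_eq_pow_pow hd hi hfrob hfix
  refine Nat.eq_of_dvd_of_forall_prime_not_dvd_div ?_ fun ℓ hℓ hℓd hdvd => ?_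
  · rw [← root_pow_card_pow_eq_self_iff, ← hπ, RingAut.pow_pow_eq_self hfrob hfix,
      algHomOfDvd_root]
  · have hzero : π ((σ ^ (d / ℓ)) (root f) - root f) = 0 := by
      rw [hj, map_sub, hπ, root_pow_card_pow_eq_self_iff.mpr (hdvd.mul_left j),
        algHomOfDvd_root, sub_self]
    exact not_isUnit_zero (hzero ▸ (hunit ℓ hℓ hℓd).map π)

theorem stmt_11_general (p : ℕ) (hp : Nat.Prime p) (d : ℕ) (hd : 1 ≤ d)
    (f : Polynomial (ZMod p)) (hdeg : f.natDegree = d)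
    (σ : RingAut (Polynomial (ZMod p) ⧸ Ideal.span {f})) (i : ℕ) (hi : Nat.Coprime i d)
    (hfrob : (σ ^ i) (Ideal.Quotient.mk (Ideal.span {f}) X) =
      (Ideal.Quotient.mk (Ideal.span {f}) X) ^ p)
    (hfix : (σ ^ d) (Ideal.Quotient.mk (Ideal.span {f}) X) =
      Ideal.Quotient.mk (Ideal.span {f}) X)
    (hunit : ∀ ℓ : ℕ, ℓ.Prime → ℓ ∣ d →
      IsUnit ((σ ^ (d / ℓ)) (Ideal.Quotient.mk (Ideal.span {f}) X) -
        Ideal.Quotient.mk (Ideal.span {f}) X)) :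
    Irreducible f := by
  have := Fact.mk hp
  have hf : f ≠ 0 := by rintro rfl; simp at hdeg; omega
  obtain ⟨g, hg, hgf⟩ := WfDvdMonoid.exists_irreducible_factor
    (not_isUnit_of_natDegree_pos f (by omega)) hf
  have hgd : g.natDegree = d := natDegree_eq_of_irreducible_of_dvd (σ := σ) (by omega) hi
    (by rwa [ZMod.card]) hfix hunit hg hgf
  exact (associated_of_dvd_of_natDegree_le hgf hf (by omega)).irreducible hg

/-- Let `p` be prime and `f ∈ (ℤ/pℤ)[x]` monic of degree `d ≥ 1`, let
`A = (ℤ/pℤ)[x]/(f)` and `α` the image of `x` in `A`. If there are a ring automorphism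
`σ` of `A` and `i` coprime to `d` with `σ^i α = α^p`, `σ^d α = α`, and
`σ^(d/ℓ) α - α` a unit of `A` for every prime `ℓ ∣ d`, then `f` is irreducible. -/
theorem stmt_11 (p : ℕ) (hp : Nat.Prime p) (d : ℕ) (hd : 1 ≤ d)
    (f : Polynomial (ZMod p)) (hmonic : f.Monic) (hdeg : f.natDegree = d)
    (σ : RingAut (Polynomial (ZMod p) ⧸ Ideal.span {f})) (i : ℕ) (hi : Nat.Coprime i d)
    (hfrob : (σ ^ i) (Ideal.Quotient.mk (Ideal.span {f}) X) =
      (Ideal.Quotient.mk (Ideal.span {f}) X) ^ p)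
    (hfix : (σ ^ d) (Ideal.Quotient.mk (Ideal.span {f}) X) =
      Ideal.Quotient.mk (Ideal.span {f}) X)
    (hunit : ∀ ℓ : ℕ, ℓ.Prime → ℓ ∣ d →
      IsUnit ((σ ^ (d / ℓ)) (Ideal.Quotient.mk (Ideal.span {f}) X) -
        Ideal.Quotient.mk (Ideal.span {f}) X)) :
    Irreducible f :=
  stmt_11_general p hp d hd f hdeg σ i hi hfrob hfix hunit
end

section
/- Let p and r be distinct primes, let Φ_r = 1 + x + x² + ⋯ + x^{r−1} ∈ (ℤ/pℤ)[x], let A = (ℤ/pℤ)[x]/(Φ_r), and let ζ denote the image of x in A. Let H be a proper subgroup of the multiplicative group (ℤ/rℤ)^×, and set η = ∑_{h ∈ H} ζ^{h}, where each h ∈ H is identified with its integer representative in {1, …, r − 1}. Then η does not lie in the image of the natural ring map ℤ/pℤ → A; that is, the Gaussian period η is not an element of ℤ/pℤ. -/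
/-!
If `η = c` in `A`, then `f = ∑_{h ∈ H} X^h - c` is a multiple of `Φ_r` of degree `< r`, hence a
constant multiple of the monic `Φ_r`, so its coefficients in degrees `1, …, r - 1` all agree.
As `1 ∈ H` they are all `1`, so every residue `1, …, r - 1` lies in `H`.
-/

open Polynomial Finset

namespace Polynomial

variable {R : Type*}

theorem exists_eq_mul_C_of_geom_sum_X_dvd [Semiring R] {n : ℕ} {f : R[X]}
    (hdvd : (∑ i ∈ range n, (X : R[X]) ^ i) ∣ f) (hf : f.natDegree < n) :
    ∃ a, f = (∑ i ∈ range n, (X : R[X]) ^ i) * C a := by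
  nontriviality R
  obtain ⟨g, rfl⟩ := hdvd
  have hq : (∑ i ∈ range n, (X : R[X]) ^ i).Monic := monic_geom_sum_X (by omega)
  have hq_deg : n - 1 ≤ (∑ i ∈ range n, (X : R[X]) ^ i).natDegree :=
    le_natDegree_of_ne_zero (by simp [coeff_X_pow, show n - 1 < n by omega])
  rcases eq_or_ne g 0 with rfl | hg0
  · exact ⟨0, by simp⟩
  have hg : g.natDegree = 0 := by
    rw [hq.natDegree_mul' hg0] at hf
    omega
  exact ⟨g.coeff 0, by rw [← eq_C_of_natDegree_eq_zero hg]⟩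

theorem coeff_eq_coeff_of_geom_sum_X_dvd [Semiring R] {n : ℕ} {f : R[X]}
    (hdvd : (∑ i ∈ range n, (X : R[X]) ^ i) ∣ f) (hf : f.natDegree < n)
    {i j : ℕ} (hi : i < n) (hj : j < n) : f.coeff i = f.coeff j := by
  obtain ⟨a, rfl⟩ := exists_eq_mul_C_of_geom_sum_X_dvd hdvd hf
  simp [coeff_mul_C, coeff_X_pow, hi, hj]

theorem eq_Ioo_of_sum_mk_X_pow_mem_range [CommRing R] [Nontrivial R] {n : ℕ} {S : Finset ℕ}
    (hS : S ⊆ Ioo 0 n) (hne : S.Nonempty)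
    (h : ∑ i ∈ S, Ideal.Quotient.mk (Ideal.span {∑ i ∈ range n, (X : R[X]) ^ i}) X ^ i ∈
      Set.range (algebraMap R (R[X] ⧸ Ideal.span {∑ i ∈ range n, (X : R[X]) ^ i}))) :
    S = Ioo 0 n := by
  obtain ⟨c, hc⟩ := h
  set f : R[X] := ∑ i ∈ S, X ^ i - C c
  have hdvd : (∑ i ∈ range n, (X : R[X]) ^ i) ∣ f := by
    rw [← Ideal.mem_span_singleton, ← Ideal.Quotient.eq_zero_iff_mem, map_sub, map_sum,
      ← Ideal.Quotient.algebraMap_eq, ← algebraMap_eq, ← IsScalarTower.algebraMap_apply]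
    simp [hc]
  obtain ⟨i₀, hi₀⟩ := hne
  have hlt : ∀ i ∈ S, i < n := fun i hi => (mem_Ioo.mp (hS hi)).2
  have hn : 0 < n := (hlt i₀ hi₀).pos
  have hdeg : f.natDegree < n := by
    refine (natDegree_sub_le _ _).trans_lt (max_lt ?_ (by simpa using hn))
    refine (natDegree_sum_le_of_forall_le _ _ fun i hi => ?_).trans_lt (Nat.pred_lt hn.ne')
    exact (natDegree_X_pow_le i).trans (Nat.le_pred_of_lt (hlt i hi))
  have hcoeff : ∀ k ∈ Ioo 0 n, f.coeff k = if k ∈ S then 1 else 0 := fun k hk => by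
    simp [f, finsetSum_coeff, coeff_X_pow, coeff_C, (mem_Ioo.mp hk).1.ne']
  refine Subset.antisymm hS fun k hk => ?_
  have := coeff_eq_coeff_of_geom_sum_X_dvd hdvd hdeg (mem_Ioo.mp hk).2 (hlt i₀ hi₀)
  rw [hcoeff k hk, hcoeff i₀ (hS hi₀)] at this
  by_contra hkS
  simp [hkS, hi₀] at this

end Polynomial

theorem stmt_12_general (p r : ℕ) (hp : Nat.Prime p) (hr : Nat.Prime r)
    (H : Subgroup (ZMod r)ˣ) (hH : H ≠ ⊤) :
    (∑ᶠ h ∈ (H : Set (ZMod r)ˣ),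
        (Ideal.Quotient.mk (Ideal.span {∑ i ∈ Finset.range r, (X : Polynomial (ZMod p)) ^ i})
          X) ^ (ZMod.val (h : ZMod r)))
      ∉ Set.range (algebraMap (ZMod p)
          (Polynomial (ZMod p) ⧸
            Ideal.span {∑ i ∈ Finset.range r, (X : Polynomial (ZMod p)) ^ i})) := by
  have : Fact (1 < p) := ⟨hp.one_lt⟩
  have : Fact (1 < r) := ⟨hr.one_lt⟩
  intro hη
  let rep : (ZMod r)ˣ → ℕ := fun u => (u : ZMod r).val
  have hrep : ∀ u, rep u ∈ Ioo 0 r := fun u =>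
    mem_Ioo.mpr ⟨ZMod.val_pos.mpr u.ne_zero, ZMod.val_lt _⟩
  have hrep_inj : Function.Injective rep := fun a b hab => Units.ext (ZMod.val_injective r hab)
  set S := (Set.toFinite (H : Set (ZMod r)ˣ)).toFinset.image rep
  have hS_sum : ∑ᶠ h ∈ (H : Set (ZMod r)ˣ),
      Ideal.Quotient.mk (Ideal.span {∑ i ∈ range r, (X : (ZMod p)[X]) ^ i}) X ^ rep h =
      ∑ i ∈ S, Ideal.Quotient.mk (Ideal.span {∑ i ∈ range r, (X : (ZMod p)[X]) ^ i}) X ^ i := by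
    rw [finsum_mem_eq_finite_toFinset_sum _ (Set.toFinite _), sum_image hrep_inj.injOn]
  have hS : S = Ioo 0 r := by
    refine eq_Ioo_of_sum_mk_X_pow_mem_range (image_subset_iff.mpr fun u _ => hrep u) ?_
      (hS_sum ▸ hη)
    exact ⟨_, mem_image_of_mem rep ((Set.toFinite _).mem_toFinset.mpr H.one_mem)⟩
  refine hH ((Subgroup.eq_top_iff' H).mpr fun u => ?_)
  obtain ⟨v, hv, hvu⟩ := mem_image.mp (hS ▸ hrep u)
  exact hrep_inj hvu ▸ (Set.toFinite _).mem_toFinset.mp hv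

/-- Let `p` and `r` be distinct primes, `Φ_r = 1 + x + ⋯ + x^(r-1) ∈ (ℤ/pℤ)[x]`,
`A = (ℤ/pℤ)[x]/(Φ_r)`, and `ζ` the image of `x` in `A`. If `H` is a proper subgroup of
`(ℤ/rℤ)ˣ`, then the Gaussian period `η = ∑_{h ∈ H} ζ^h` (each `h` identified with its
integer representative in `{1, …, r-1}`) does not lie in the image of `ℤ/pℤ` in `A`. -/
theorem stmt_12 (p r : ℕ) (hp : Nat.Prime p) (hr : Nat.Prime r) (hpr : p ≠ r)
    (H : Subgroup (ZMod r)ˣ) (hH : H ≠ ⊤) :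
    (∑ᶠ h ∈ (H : Set (ZMod r)ˣ),
        (Ideal.Quotient.mk (Ideal.span {∑ i ∈ Finset.range r, (X : Polynomial (ZMod p)) ^ i})
          X) ^ (ZMod.val (h : ZMod r)))
      ∉ Set.range (algebraMap (ZMod p)
          (Polynomial (ZMod p) ⧸
            Ideal.span {∑ i ∈ Finset.range r, (X : Polynomial (ZMod p)) ^ i})) :=
  stmt_12_general p r hp hr H hH
end
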